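/- arXiv:2305.01372 — 3 statements merged into one kernel-verified Lean document; each statement's English description precedes it below -/
import Mathlib

section
/- Let M = (F, r) be a faithful maniplex of rank 4 in which every 0-face and every 3-face is non-bipartite, and let M̄ = (F × ZMod 2, r̄) be its canonical double cover (which under these hypotheses is a maniplex of rank 4). Then the number of 0-faces of M̄ equals the number of 0-faces of M, the number of 3-faces of M̄ equals the number of 3-faces of M, the number of 1-faces of M̄ is twice the number of 1-faces of M, and the number of 2-faces of M̄ is twice the number of 2-faces of M. -/
/-- The orbit of a flag `u` under the subgroup generated by `{r j : j ∈ J}`. -/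
def MOrbit {n : ℕ} {F : Type*} (r : Fin n → Equiv.Perm F) (J : Set (Fin n)) (u : F) :
    Set F :=
  {v | ∃ g ∈ Subgroup.closure (r '' J), v = g u}

/-- `(F, r)` is a maniplex of rank `n`. -/
def IsManiplex {F : Type*} (n : ℕ) (r : Fin n → Equiv.Perm F) : Prop :=
  Nonempty F ∧
  (∀ (i : Fin n) (u : F), r i (r i u) = u) ∧
  (∀ (i : Fin n) (u : F), r i u ≠ u) ∧
  (∀ u v : F, v ∈ MOrbit r Set.univ u) ∧
  ∀ i j : Fin n, 1 < |(i : ℤ) - (j : ℤ)| →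
    (∀ u : F, r i (r j (r i (r j u))) = u) ∧ ∀ u : F, r i (r j u) ≠ u

/-- The `i`-face containing the flag `u`. -/
def MFace {n : ℕ} {F : Type*} (r : Fin n → Equiv.Perm F) (i : Fin n) (u : F) : Set F :=
  MOrbit r {i}ᶜ u

/-- A maniplex is faithful if the intersection of all faces containing a flag is a singleton. -/
def IsFaithful {n : ℕ} {F : Type*} (r : Fin n → Equiv.Perm F) : Prop :=
  ∀ u : F, (⋂ i : Fin n, MFace r i u) = {u}

/-- `O` is a face of rank `k ∈ {-1, …, n}`, where the improper ranks `-1` and `n`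
give the whole flag set. -/
def IsRankFace {n : ℕ} {F : Type*} (r : Fin n → Equiv.Perm F) (k : ℤ) (O : Set F) : Prop :=
  ((∃ i : Fin n, (i : ℤ) = k) ∧ ∃ u : F, O = MOrbit r {j : Fin n | (j : ℤ) ≠ k} u) ∨
  ((¬ ∃ i : Fin n, (i : ℤ) = k) ∧ O = Set.univ)

/-- A maniplex is thin if any incident pair of an `(i-1)`-face and `(i+1)`-face lies in
exactly two `i`-faces. -/
def IsThin {n : ℕ} {F : Type*} (r : Fin n → Equiv.Perm F) : Prop :=
  ∀ (i : Fin n) (Fm Fp : Set F),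
    IsRankFace r ((i : ℤ) - 1) Fm → IsRankFace r ((i : ℤ) + 1) Fp →
    (Fm ∩ Fp).Nonempty →
    ∃ O₁ O₂ : Set F, O₁ ≠ O₂ ∧
      {O : Set F | (∃ u : F, O = MFace r i u) ∧ (O ∩ (Fm ∩ Fp)).Nonempty} = {O₁, O₂}

/-- The component intersection property. -/
def HasCIP {n : ℕ} {F : Type*} (r : Fin n → Equiv.Perm F) : Prop :=
  ∀ (k : ℕ) (j : Fin k → Fin n) (H : Fin k → Set F),
    Function.Injective j →
    (∀ l, ∃ u : F, H l = MFace r (j l) u) →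
    (∀ l m, (H l ∩ H m).Nonempty) →
    ∀ u v : F, u ∈ ⋂ l, H l → v ∈ ⋂ l, H l →
      v ∈ MOrbit r {m : Fin n | m ∉ Set.range j} u

/-- An automorphism of a maniplex: a permutation of the flags commuting with every `r i`. -/
def IsManiplexAuto {n : ℕ} {F : Type*} (r : Fin n → Equiv.Perm F) (φ : Equiv.Perm F) : Prop :=
  ∀ (i : Fin n) (u : F), φ (r i u) = r i (φ u)

/-- A maniplex is regular if its automorphism group is transitive on flags. -/
def IsRegularManiplex {n : ℕ} {F : Type*} (r : Fin n → Equiv.Perm F) : Prop :=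
  ∀ u v : F, ∃ φ : Equiv.Perm F, IsManiplexAuto r φ ∧ φ u = v

/-- A face `H`, an orbit of the subgroup generated by `{r j : j ∈ J}`, is bipartite. -/
def FaceBipartite {n : ℕ} {F : Type*} (r : Fin n → Equiv.Perm F) (J : Set (Fin n))
    (H : Set F) : Prop :=
  ∃ f : F → ZMod 2, ∀ j ∈ J, ∀ x ∈ H, f (r j x) = f x + 1

/-- The number of `i`-faces of a maniplex. -/
noncomputable def NumFaces {n : ℕ} {F : Type*} (r : Fin n → Equiv.Perm F) (i : Fin n) : ℕ :=
  {O : Set F | ∃ u : F, O = MFace r i u}.ncard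

/-- The canonical double cover of a maniplex. -/
def cdc {n : ℕ} {F : Type*} (r : Fin n → Equiv.Perm F) (i : Fin n) :
    Equiv.Perm (F × ZMod 2) :=
  Equiv.prodCongr (r i) (Equiv.addRight (1 : ZMod 2))

/-- The raviolo of a maniplex of rank `n`: a maniplex of rank `n+1` with two facets. -/
def raviolo {n : ℕ} {F : Type*} (r : Fin n → Equiv.Perm F) (i : Fin (n + 1)) :
    Equiv.Perm (F × ZMod 2) :=
  if h : (i : ℕ) < n then Equiv.prodCongr (r ⟨i, h⟩) (Equiv.refl (ZMod 2))
  else Equiv.prodCongr (Equiv.refl F) (Equiv.addRight (1 : ZMod 2))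

/-- A voltage assignment on a maniplex. -/
def IsVoltage {n : ℕ} {F : Type*} {G : Type*} [Group G] (r : Fin n → Equiv.Perm F)
    (ζ : F × Fin n → G) : Prop :=
  ∀ (u : F) (i : Fin n), ζ (r i u, i) = (ζ (u, i))⁻¹

/-- The permutations of the derived cover of a maniplex with voltage assignment `ζ`. -/
def mcov {n : ℕ} {F : Type*} {G : Type*} [Group G] (r : Fin n → Equiv.Perm F)
    (ζ : F × Fin n → G) (i : Fin n) : Equiv.Perm (F × G) where
  toFun p := (r i p.1, ζ (p.1, i) * p.2)
  invFun p := ((r i).symm p.1, (ζ ((r i).symm p.1, i))⁻¹ * p.2)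
  left_inv p := by simp
  right_inv p := by simp

namespace CDC

variable {n : ℕ} {F : Type*}

/-- Apply a word of generators to a flag. -/
def wapp (r : Fin n → Equiv.Perm F) (L : List (Fin n)) (u : F) : F := (L.map r).prod u

@[simp] lemma wapp_nil (r : Fin n → Equiv.Perm F) (u : F) : wapp r [] u = u := rfl

@[simp] lemma wapp_cons (r : Fin n → Equiv.Perm F) (j : Fin n) (L : List (Fin n)) (u : F) :
    wapp r (j :: L) u = r j (wapp r L u) := by
  simp [wapp, List.prod_cons, Equiv.Perm.mul_apply]

lemma wapp_append (r : Fin n → Equiv.Perm F) (L₁ L₂ : List (Fin n)) (u : F) :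
    wapp r (L₁ ++ L₂) u = wapp r L₁ (wapp r L₂ u) := by
  induction L₁ with
  | nil => simp
  | cons j L ih => simp [ih]

lemma wapp_reverse {r : Fin n → Equiv.Perm F} (hinv : ∀ i u, r i (r i u) = u)
    {L : List (Fin n)} {u v : F} (h : wapp r L u = v) : wapp r L.reverse v = u := by
  induction L generalizing u v with
  | nil => simpa using h.symm
  | cons j L ih =>
    rw [wapp_cons] at h
    have h2 : wapp r L u = r j v := by rw [← h, hinv]
    rw [List.reverse_cons, wapp_append]
    simpa using ih h2

lemma wapp_mem_orbit {r : Fin n → Equiv.Perm F} {J : Set (Fin n)} {u : F} {L : List (Fin n)}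
    (hL : ∀ j ∈ L, j ∈ J) : wapp r L u ∈ MOrbit r J u := by
  refine ⟨(L.map r).prod, ?_, rfl⟩
  refine Subgroup.list_prod_mem _ ?_
  intro g hg
  obtain ⟨j, hj, rfl⟩ := List.mem_map.1 hg
  exact Subgroup.subset_closure ⟨j, hL j hj, rfl⟩

lemma mem_orbit_self {r : Fin n → Equiv.Perm F} {J : Set (Fin n)} {u : F} :
    u ∈ MOrbit r J u :=
  ⟨1, one_mem _, rfl⟩

lemma mem_orbit_iff {r : Fin n → Equiv.Perm F} (hinv : ∀ i u, r i (r i u) = u)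
    {J : Set (Fin n)} {u v : F} :
    v ∈ MOrbit r J u ↔ ∃ L : List (Fin n), (∀ j ∈ L, j ∈ J) ∧ v = wapp r L u := by
  constructor
  · rintro ⟨g, hg, rfl⟩
    have key : ∃ L : List (Fin n), (∀ j ∈ L, j ∈ J) ∧ ∀ w, g w = wapp r L w := by
      induction hg using Subgroup.closure_induction with
      | mem x hx =>
        obtain ⟨j, hj, rfl⟩ := hx
        exact ⟨[j], by simpa using hj, fun w => by simp⟩
      | one => exact ⟨[], by simp, fun w => by simp⟩
      | mul x y hx hy ihx ihy =>
        obtain ⟨L₁, h₁, e₁⟩ := ihx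
        obtain ⟨L₂, h₂, e₂⟩ := ihy
        refine ⟨L₁ ++ L₂, ?_, fun w => ?_⟩
        · intro j hj
          rcases List.mem_append.1 hj with h | h
          exacts [h₁ j h, h₂ j h]
        · rw [Equiv.Perm.mul_apply, e₂, e₁, wapp_append]
      | inv x hx ih =>
        obtain ⟨L, h₁, e⟩ := ih
        refine ⟨L.reverse, fun j hj => h₁ j (List.mem_reverse.1 hj), fun w => ?_⟩
        have hz : wapp r L (x⁻¹ w) = w := by
          rw [← e (x⁻¹ w)]
          simp
        exact (wapp_reverse hinv hz).symm
    obtain ⟨L, hL, hw⟩ := key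
    exact ⟨L, hL, hw u⟩
  · rintro ⟨L, hL, rfl⟩
    exact wapp_mem_orbit hL

lemma orbit_eq {r : Fin n → Equiv.Perm F} (hinv : ∀ i u, r i (r i u) = u)
    {J : Set (Fin n)} {u v : F} (h : v ∈ MOrbit r J u) : MOrbit r J u = MOrbit r J v := by
  obtain ⟨L, hL, rfl⟩ := (mem_orbit_iff hinv).1 h
  ext w
  rw [mem_orbit_iff hinv, mem_orbit_iff hinv]
  constructor
  · rintro ⟨M, hM, rfl⟩
    refine ⟨M ++ L.reverse, ?_, ?_⟩
    · intro j hj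
      rcases List.mem_append.1 hj with h | h
      exacts [hM j h, hL j (List.mem_reverse.1 h)]
    · rw [wapp_append, wapp_reverse hinv rfl]
  · rintro ⟨M, hM, rfl⟩
    refine ⟨M ++ L, ?_, ?_⟩
    · intro j hj
      rcases List.mem_append.1 hj with h | h
      exacts [hM j h, hL j h]
    · rw [wapp_append]

lemma zmod2_even {k : ℕ} (h : Even k) : (k : ZMod 2) = 0 := by
  obtain ⟨m, rfl⟩ := h
  push_cast
  rw [← two_mul, show (2 : ZMod 2) = 0 by decide, zero_mul]

lemma zmod2_odd {k : ℕ} (h : Odd k) : (k : ZMod 2) = 1 := by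
  obtain ⟨m, rfl⟩ := h
  push_cast
  rw [show (2 : ZMod 2) = 0 by decide, zero_mul, zero_add]

lemma zmod2_cast_eq_of_even_add {a b : ℕ} (h : Even (a + b)) : (a : ZMod 2) = b := by
  have hiff : Even a ↔ Even b := Nat.even_add.1 h
  rcases Nat.even_or_odd a with ha | ha
  · rw [zmod2_even ha, zmod2_even (hiff.1 ha)]
  · have hb : Odd b := by
      rcases Nat.even_or_odd b with hb | hb
      · exact absurd (hiff.2 hb) ((Nat.not_even_iff_odd.2 ha))
      · exact hb
    rw [zmod2_odd ha, zmod2_odd hb]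


lemma walk_parity_eq {r : Fin n → Equiv.Perm F} (hinv : ∀ i u, r i (r i u) = u)
    {J : Set (Fin n)} {u : F}
    (hev : ∀ L : List (Fin n), (∀ j ∈ L, j ∈ J) → wapp r L u = u → Even L.length)
    {L₁ L₂ : List (Fin n)} (h₁ : ∀ j ∈ L₁, j ∈ J) (h₂ : ∀ j ∈ L₂, j ∈ J)
    (he : wapp r L₁ u = wapp r L₂ u) :
    (L₁.length : ZMod 2) = (L₂.length : ZMod 2) := by
  have hcl : wapp r (L₂.reverse ++ L₁) u = u := by
    rw [wapp_append, he]
    exact wapp_reverse hinv rfl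
  have hevc := hev _ (fun j hj => by
    rcases List.mem_append.1 hj with h | h
    exacts [h₂ j (List.mem_reverse.1 h), h₁ j h]) hcl
  rw [List.length_append, List.length_reverse] at hevc
  exact (zmod2_cast_eq_of_even_add hevc).symm

lemma f_wapp {r : Fin n → Equiv.Perm F} {J : Set (Fin n)} {u : F} {f : F → ZMod 2}
    (hf : ∀ j ∈ J, ∀ x ∈ MOrbit r J u, f (r j x) = f x + 1)
    (L : List (Fin n)) (hL : ∀ j ∈ L, j ∈ J) :
    f (wapp r L u) = f u + L.length := by
  induction L with
  | nil => simp
  | cons j L ih =>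
    have hx : wapp r L u ∈ MOrbit r J u := wapp_mem_orbit (fun k hk => hL k (List.mem_cons_of_mem _ hk))
    rw [wapp_cons, hf j (hL j (List.mem_cons_self)) _ hx,
      ih (fun k hk => hL k (List.mem_cons_of_mem _ hk)), List.length_cons]
    push_cast
    ring

lemma bipartite_of_even {r : Fin n → Equiv.Perm F} (hinv : ∀ i u, r i (r i u) = u)
    {J : Set (Fin n)} (u : F)
    (hev : ∀ L : List (Fin n), (∀ j ∈ L, j ∈ J) → wapp r L u = u → Even L.length) :
    FaceBipartite r J (MOrbit r J u) := by
  classical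
  refine ⟨fun v => if hv : ∃ L : List (Fin n), (∀ j ∈ L, j ∈ J) ∧ v = wapp r L u
    then ((hv.choose.length : ℕ) : ZMod 2) else 0, ?_⟩
  intro j hj x hx
  have hx' : ∃ L : List (Fin n), (∀ j ∈ L, j ∈ J) ∧ x = wapp r L u := (mem_orbit_iff hinv).1 hx
  have hrx : ∃ L : List (Fin n), (∀ j ∈ L, j ∈ J) ∧ r j x = wapp r L u := by
    refine ⟨j :: hx'.choose, ?_, ?_⟩
    · intro k hk
      rcases List.mem_cons.1 hk with h | h
      · exact h ▸ hj
      · exact hx'.choose_spec.1 k h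
    · rw [wapp_cons, ← hx'.choose_spec.2]
  simp only [dif_pos hrx, dif_pos hx']
  have hpar : ((hrx.choose.length : ℕ) : ZMod 2) = ((j :: hx'.choose).length : ℕ) := by
    refine walk_parity_eq hinv hev hrx.choose_spec.1 ?_ ?_
    · intro k hk
      rcases List.mem_cons.1 hk with h | h
      · exact h ▸ hj
      · exact hx'.choose_spec.1 k h
    · rw [← hrx.choose_spec.2, wapp_cons, ← hx'.choose_spec.2]
  rw [hpar, List.length_cons]
  push_cast
  ring

@[simp] lemma cdc_apply (r : Fin n → Equiv.Perm F) (i : Fin n) (p : F × ZMod 2) :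
    cdc r i p = (r i p.1, p.2 + 1) := rfl

lemma cdc_inv {r : Fin n → Equiv.Perm F} (hinv : ∀ i u, r i (r i u) = u) :
    ∀ (i : Fin n) (p : F × ZMod 2), cdc r i (cdc r i p) = p := by
  intro i p
  rw [cdc_apply, cdc_apply]
  refine Prod.ext_iff.2 ⟨hinv i p.1, ?_⟩
  show p.2 + 1 + 1 = p.2
  have : ∀ x : ZMod 2, x + 1 + 1 = x := by decide
  exact this p.2

lemma wapp_cdc (r : Fin n → Equiv.Perm F) (L : List (Fin n)) (p : F × ZMod 2) :
    wapp (cdc r) L p = (wapp r L p.1, p.2 + L.length) := by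
  induction L with
  | nil => simp
  | cons j L ih =>
    rw [wapp_cons, ih, cdc_apply, wapp_cons]
    refine Prod.ext_iff.2 ⟨rfl, ?_⟩
    show p.2 + (L.length : ZMod 2) + 1 = p.2 + ((L.length + 1 : ℕ) : ZMod 2)
    push_cast
    ring


lemma zmod2_ne {x y : ZMod 2} (h : x ≠ y) : x = y + 1 := by
  revert x y
  decide

lemma cdc_orbit_of_odd {r : Fin n → Equiv.Perm F} (hinv : ∀ i u, r i (r i u) = u)
    {J : Set (Fin n)} {u : F} {L₀ : List (Fin n)} (h₀ : ∀ j ∈ L₀, j ∈ J)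
    (hc : wapp r L₀ u = u) (hoddL : Odd L₀.length) (a : ZMod 2) :
    MOrbit (cdc r) J (u, a) = (MOrbit r J u) ×ˢ (Set.univ : Set (ZMod 2)) := by
  ext p
  rw [Set.mem_prod, mem_orbit_iff (cdc_inv hinv), mem_orbit_iff hinv]
  constructor
  · rintro ⟨L, hL, hp⟩
    rw [wapp_cdc] at hp
    exact ⟨⟨L, hL, congrArg Prod.fst hp⟩, trivial⟩
  · rintro ⟨⟨L, hL, hv⟩, -⟩
    by_cases hb : p.2 = a + L.length
    · refine ⟨L, hL, ?_⟩
      rw [wapp_cdc]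
      exact Prod.ext_iff.2 ⟨hv, hb⟩
    · refine ⟨L ++ L₀, ?_, ?_⟩
      · intro j hj
        rcases List.mem_append.1 hj with h | h
        exacts [hL j h, h₀ j h]
      · rw [wapp_cdc]
        refine Prod.ext_iff.2 ⟨?_, ?_⟩
        · rw [wapp_append, hc]
          exact hv
        · show p.2 = a + ((L ++ L₀).length : ℕ)
          rw [List.length_append, Nat.cast_add, zmod2_odd hoddL, ← add_assoc]
          exact zmod2_ne hb
  
lemma cdc_orbit_of_bipartite {r : Fin n → Equiv.Perm F} (hinv : ∀ i u, r i (r i u) = u)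
    {J : Set (Fin n)} {u : F} {f : F → ZMod 2}
    (hf : ∀ j ∈ J, ∀ x ∈ MOrbit r J u, f (r j x) = f x + 1) (a : ZMod 2) :
    MOrbit (cdc r) J (u, a) =
      {p : F × ZMod 2 | p.1 ∈ MOrbit r J u ∧ p.2 = a + f p.1 + f u} := by
  have hz : ∀ x y z : ZMod 2, x + (y + z) + y = x + z := by decide
  ext p
  rw [Set.mem_setOf_eq, mem_orbit_iff (cdc_inv hinv), mem_orbit_iff hinv]
  constructor
  · rintro ⟨L, hL, hp⟩
    rw [wapp_cdc] at hp
    have h1 : p.1 = wapp r L u := congrArg Prod.fst hp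
    have h2 : p.2 = a + (L.length : ℕ) := congrArg Prod.snd hp
    refine ⟨⟨L, hL, h1⟩, ?_⟩
    rw [h2, h1, f_wapp hf L hL, hz]
  · rintro ⟨⟨L, hL, hv⟩, hp2⟩
    refine ⟨L, hL, ?_⟩
    rw [wapp_cdc]
    refine Prod.ext_iff.2 ⟨hv, ?_⟩
    rw [hp2, hv, f_wapp hf L hL, hz]

lemma fst_image_cdc_orbit {r : Fin n → Equiv.Perm F} (hinv : ∀ i u, r i (r i u) = u)
    (J : Set (Fin n)) (p : F × ZMod 2) :
    Prod.fst '' MOrbit (cdc r) J p = MOrbit r J p.1 := by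
  ext v
  constructor
  · rintro ⟨q, hq, rfl⟩
    obtain ⟨L, hL, rfl⟩ := (mem_orbit_iff (cdc_inv hinv)).1 hq
    rw [wapp_cdc]
    exact wapp_mem_orbit hL
  · intro hv
    obtain ⟨L, hL, rfl⟩ := (mem_orbit_iff hinv).1 hv
    exact ⟨wapp (cdc r) L p, wapp_mem_orbit hL, by rw [wapp_cdc]⟩

lemma cdc_face_reindex {r : Fin n → Equiv.Perm F} (hinv : ∀ i u, r i (r i u) = u)
    {J : Set (Fin n)} {u v : F} (h : v ∈ MOrbit r J u) (b : ZMod 2) :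
    ∃ ε : ZMod 2, MOrbit (cdc r) J (v, b) = MOrbit (cdc r) J (u, ε) := by
  obtain ⟨L, hL, rfl⟩ := (mem_orbit_iff hinv).1 h
  refine ⟨b + L.length, ?_⟩
  have hx : ∀ x y : ZMod 2, x = x + y + y := by decide
  have hmem : ((wapp r L u : F), b) ∈ MOrbit (cdc r) J (u, b + L.length) := by
    have h2 : ((wapp r L u : F), b) = wapp (cdc r) L (u, b + (L.length : ℕ)) := by
      rw [wapp_cdc]
      exact Prod.ext_iff.2 ⟨rfl, hx b L.length⟩
    rw [h2]
    exact wapp_mem_orbit hL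
  exact (orbit_eq (cdc_inv hinv) hmem).symm


lemma numfaces_cdc_eq {r : Fin n → Equiv.Perm F} (hinv : ∀ i u, r i (r i u) = u) (i : Fin n)
    (hodd : ∀ u : F, ∃ L : List (Fin n), (∀ j ∈ L, j ∈ ({i}ᶜ : Set (Fin n))) ∧
      wapp r L u = u ∧ Odd L.length) :
    NumFaces (cdc r) i = NumFaces r i := by
  have key : ∀ (u : F) (a : ZMod 2),
      MFace (cdc r) i (u, a) = (MFace r i u) ×ˢ (Set.univ : Set (ZMod 2)) := by
    intro u a
    obtain ⟨L₀, h₀, hc, hoddL⟩ := hodd u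
    exact cdc_orbit_of_odd hinv h₀ hc hoddL a
  have himg : {O : Set (F × ZMod 2) | ∃ p : F × ZMod 2, O = MFace (cdc r) i p} =
      (fun O : Set F => O ×ˢ (Set.univ : Set (ZMod 2))) '' {O : Set F | ∃ u : F, O = MFace r i u} := by
    ext O'
    simp only [Set.mem_setOf_eq, Set.mem_image]
    constructor
    · rintro ⟨⟨u, a⟩, rfl⟩
      exact ⟨MFace r i u, ⟨u, rfl⟩, (key u a).symm⟩
    · rintro ⟨O, ⟨u, rfl⟩, rfl⟩
      exact ⟨(u, 0), (key u 0).symm⟩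
  rw [NumFaces, NumFaces, himg, Set.ncard_image_of_injective]
  intro O₁ O₂ h
  ext x
  have hx := Set.ext_iff.1 h (x, 0)
  simpa using hx

lemma numfaces_cdc_double {F : Type*} {r : Fin n → Equiv.Perm F}
    (hinv : ∀ i u, r i (r i u) = u) (i : Fin n)
    (hbip : ∀ u : F, FaceBipartite r ({i}ᶜ) (MFace r i u)) :
    NumFaces (cdc r) i = 2 * NumFaces r i := by
  classical
  have hz : ∀ x y : ZMod 2, x + y + y = x := by decide
  have hdet : ∀ (u : F) (a b : ZMod 2), (u, b) ∈ MOrbit (cdc r) ({i}ᶜ) (u, a) → b = a := by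
    intro u a b hmem
    obtain ⟨f, hf⟩ := hbip u
    rw [cdc_orbit_of_bipartite hinv hf a] at hmem
    have h2 : b = a + f u + f u := hmem.2
    rw [h2]
    exact hz a (f u)
  set Q : Set F × ZMod 2 → Set (F × ZMod 2) := fun Oe =>
    if h : ∃ u : F, Oe.1 = MFace r i u then MOrbit (cdc r) ({i}ᶜ) (h.choose, Oe.2) else ∅
    with hQ
  have himg : {O : Set (F × ZMod 2) | ∃ p : F × ZMod 2, O = MFace (cdc r) i p}
      = Q '' (({O : Set F | ∃ u : F, O = MFace r i u}) ×ˢ (Set.univ : Set (ZMod 2))) := by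
    ext O'
    simp only [Set.mem_setOf_eq, Set.mem_image, Set.mem_prod, Set.mem_univ, and_true]
    constructor
    · rintro ⟨⟨v, b⟩, rfl⟩
      have h : ∃ u : F, MFace r i v = MFace r i u := ⟨v, rfl⟩
      have hvmem : v ∈ MOrbit r ({i}ᶜ) h.choose := by
        have h1 : v ∈ MFace r i v := mem_orbit_self
        rwa [h.choose_spec] at h1
      obtain ⟨ε, hε⟩ := cdc_face_reindex hinv hvmem b
      refine ⟨(MFace r i v, ε), ⟨v, rfl⟩, ?_⟩
      rw [hQ]
      simp only [dif_pos h]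
      exact hε.symm
    · rintro ⟨⟨O, ε⟩, ⟨u, rfl⟩, rfl⟩
      have h : ∃ w : F, MFace r i u = MFace r i w := ⟨u, rfl⟩
      rw [hQ]
      simp only [dif_pos h]
      exact ⟨(h.choose, ε), rfl⟩
  have hinj : Set.InjOn Q (({O : Set F | ∃ u : F, O = MFace r i u}) ×ˢ (Set.univ : Set (ZMod 2))) := by
    rintro ⟨O₁, ε₁⟩ hm₁ ⟨O₂, ε₂⟩ hm₂ heq
    obtain ⟨h₁, -⟩ := hm₁
    obtain ⟨h₂, -⟩ := hm₂
    simp only [Set.mem_setOf_eq] at h₁ h₂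
    rw [hQ] at heq
    simp only [dif_pos h₁, dif_pos h₂] at heq
    have hface : MFace r i (h₁.choose) = MFace r i (h₂.choose) := by
      have himg2 := congrArg (Set.image Prod.fst) heq
      rwa [fst_image_cdc_orbit hinv, fst_image_cdc_orbit hinv] at himg2
    have hO : O₁ = O₂ := by
      rw [h₁.choose_spec, h₂.choose_spec, hface]
    subst hO
    have hpf : h₁ = h₂ := rfl
    subst hpf
    have hee : ε₂ = ε₁ := by
      refine hdet h₁.choose ε₁ ε₂ ?_
      rw [heq]
      exact mem_orbit_self
    rw [hee]
  rw [NumFaces, NumFaces, himg, Set.ncard_image_of_injOn hinj,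
    ← Nat.card_coe_set_eq, Nat.card_congr (Equiv.Set.prod _ _), Nat.card_prod,
    Nat.card_coe_set_eq, Nat.card_congr (Equiv.Set.univ _)]
  rw [Nat.card_zmod]
  ring


section Dihedral

variable {F : Type*}

lemma conj_T {A B : Equiv.Perm F} (hA2 : A * A = 1) (hB2 : B * B = 1) (m : ℤ) :
    A * (A * B) ^ m = (A * B) ^ (-m) * A := by
  have hAi : A⁻¹ = A := inv_eq_of_mul_eq_one_right hA2
  have hBi : B⁻¹ = B := inv_eq_of_mul_eq_one_right hB2
  have hconj : A * (A * B) * A⁻¹ = (A * B)⁻¹ := by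
    rw [hAi, mul_inv_rev, hAi, hBi, ← mul_assoc, hA2, one_mul]
  have h2 : (A * B) ^ (-m) = A * (A * B) ^ m * A⁻¹ := by
    rw [zpow_neg, ← inv_zpow, ← hconj, conj_zpow]
  rw [h2, hAi, mul_assoc, mul_assoc, hA2, mul_one]

lemma B_mul_T {A B : Equiv.Perm F} (hA2 : A * A = 1) (hB2 : B * B = 1) (m : ℤ) :
    B * (A * B) ^ m = (A * B) ^ (-(m+1)) * A := by
  have h1 : A * (A * B) ^ (m+1) = B * (A * B) ^ m := by
    rw [show m + 1 = 1 + m by ring, zpow_add, zpow_one, ← mul_assoc, ← mul_assoc, hA2, one_mul]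
  rw [← h1, conj_T hA2 hB2]

lemma dihedral_words {A B : Equiv.Perm F} (hA2 : A * A = 1) (hB2 : B * B = 1) :
    ∀ L : List (Equiv.Perm F), (∀ g ∈ L, g = A ∨ g = B) →
      ∃ m : ℤ, (Even L.length ∧ L.prod = (A * B) ^ m) ∨
        (Odd L.length ∧ L.prod = (A * B) ^ m * A) := by
  intro L
  induction L with
  | nil => exact fun _ => ⟨0, Or.inl ⟨Even.zero, by simp⟩⟩
  | cons g L ih =>
    intro hL
    obtain ⟨m, hm⟩ := ih (fun x hx => hL x (List.mem_cons_of_mem _ hx))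
    have hg := hL g (List.mem_cons_self)
    rw [List.prod_cons, List.length_cons]
    rcases hg with rfl | rfl
    · rcases hm with ⟨he, hp⟩ | ⟨ho, hp⟩
      · refine ⟨-m, Or.inr ⟨he.add_one, ?_⟩⟩
        rw [hp, conj_T hA2 hB2]
      · refine ⟨-m, Or.inl ⟨ho.add_one, ?_⟩⟩
        rw [hp, ← mul_assoc, conj_T hA2 hB2, mul_assoc, hA2, mul_one]
    · rcases hm with ⟨he, hp⟩ | ⟨ho, hp⟩
      · refine ⟨-(m+1), Or.inr ⟨he.add_one, ?_⟩⟩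
        rw [hp, B_mul_T hA2 hB2]
      · refine ⟨-(m+1), Or.inl ⟨ho.add_one, ?_⟩⟩
        rw [hp, ← mul_assoc, B_mul_T hA2 hB2, mul_assoc, hA2, mul_one]

lemma no_fixed_reflection {A B : Equiv.Perm F} (hA2 : A * A = 1) (hB2 : B * B = 1)
    (hA : ∀ x, A x ≠ x) (hB : ∀ x, B x ≠ x) (m : ℤ) (u : F) :
    ((A * B) ^ m * A) u ≠ u := by
  set T := A * B with hT
  intro h
  have h1 : A u = (T ^ (-m)) u := by
    have e1 : T ^ (-m) * (T ^ m * A) = A := by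
      rw [← mul_assoc, ← zpow_add, neg_add_cancel, zpow_zero, one_mul]
    calc A u = (T ^ (-m) * (T ^ m * A)) u := by rw [e1]
    _ = (T ^ (-m)) ((T ^ m * A) u) := by rw [Equiv.Perm.mul_apply]
    _ = (T ^ (-m)) u := by rw [h]
  have key : ∀ k : ℤ, A ((T ^ (-k)) u) = (T ^ (k - m)) u := by
    intro k
    calc A ((T ^ (-k)) u) = (A * T ^ (-k)) u := (Equiv.Perm.mul_apply _ _ _).symm
    _ = (T ^ k * A) u := by rw [conj_T hA2 hB2, neg_neg]
    _ = (T ^ k) (A u) := Equiv.Perm.mul_apply _ _ _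
    _ = (T ^ k) ((T ^ (-m)) u) := by rw [h1]
    _ = (T ^ k * T ^ (-m)) u := (Equiv.Perm.mul_apply _ _ _).symm
    _ = (T ^ (k - m)) u := by rw [← zpow_add, show k + -m = k - m by ring]
  rcases Int.even_or_odd m with ⟨k, hk⟩ | ⟨k, hk⟩
  · refine hA ((T ^ (-k)) u) ?_
    rw [key k, show k - m = -k by omega]
  · refine hB ((T ^ (-(k+1))) u) ?_
    have hv : A ((T ^ (-k)) u) = (T ^ (-(k+1))) u := by
      rw [key k, show k - m = -(k+1) by omega]
    calc B ((T ^ (-(k+1))) u) = (B * T ^ (-(k+1))) u := (Equiv.Perm.mul_apply _ _ _).symm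
    _ = (A * T ^ (-k)) u := by
        have hAT : A * T = B := by rw [hT, ← mul_assoc, hA2, one_mul]
        have e2 : A * T ^ (-k : ℤ) = B * T ^ (-(k+1) : ℤ) := by
          rw [show (-k : ℤ) = 1 + (-(k+1)) by ring, zpow_add, zpow_one, ← mul_assoc, hAT]
        rw [e2]
    _ = A ((T ^ (-k)) u) := Equiv.Perm.mul_apply _ _ _
    _ = (T ^ (-(k+1))) u := hv

lemma even_closed_word {A B : Equiv.Perm F} (hA2 : A * A = 1) (hB2 : B * B = 1)
    (hA : ∀ x, A x ≠ x) (hB : ∀ x, B x ≠ x) (L : List (Equiv.Perm F))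
    (hL : ∀ g ∈ L, g = A ∨ g = B) (u : F) (h : L.prod u = u) : Even L.length := by
  obtain ⟨m, hm⟩ := dihedral_words hA2 hB2 L hL
  rcases hm with ⟨he, -⟩ | ⟨ho, hp⟩
  · exact he
  · rw [hp] at h
    exact absurd h (no_fixed_reflection hA2 hB2 hA hB m u)

end Dihedral


lemma wapp_def (r : Fin n → Equiv.Perm F) (L : List (Fin n)) (u : F) :
    wapp r L u = (L.map r).prod u := rfl

lemma central_split {r : Fin n → Equiv.Perm F} {c : Fin n}
    (L : List (Fin n)) (hcomm : ∀ j ∈ L, j ≠ c → Commute (r c) (r j)) :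
    ∃ k : ℕ, (L.map r).prod = (r c) ^ k * ((L.filter (fun j => decide (j ≠ c))).map r).prod ∧
      k + (L.filter (fun j => decide (j ≠ c))).length = L.length := by
  induction L with
  | nil => exact ⟨0, by simp, by simp⟩
  | cons j L ih =>
    obtain ⟨k, hk, hlen⟩ := ih (fun x hx hne => hcomm x (List.mem_cons_of_mem _ hx) hne)
    by_cases hj : j = c
    · subst hj
      have hfil : (j :: L).filter (fun x => decide (x ≠ j)) = L.filter (fun x => decide (x ≠ j)) := by
        simp [List.filter_cons]
      refine ⟨k + 1, ?_, ?_⟩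
      · rw [hfil, List.map_cons, List.prod_cons, hk, ← mul_assoc, ← pow_succ']
      · rw [hfil, List.length_cons]
        omega
    · have hfil : (j :: L).filter (fun x => decide (x ≠ c)) = j :: L.filter (fun x => decide (x ≠ c)) := by
        simp [List.filter_cons, hj]
      have hcj : Commute (r j) ((r c) ^ k) :=
        ((hcomm j (List.mem_cons_self) hj).symm).pow_right k
      refine ⟨k, ?_, ?_⟩
      · rw [hfil, List.map_cons, List.prod_cons, hk, List.map_cons, List.prod_cons,
          ← mul_assoc, hcj.eq, mul_assoc]
      · rw [hfil, List.length_cons, List.length_cons]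
        omega

lemma not_walk_avoid {r : Fin n → Equiv.Perm F}
    (hfpf : ∀ (i : Fin n) (u : F), r i u ≠ u) (hf : IsFaithful r) (c : Fin n)
    (L : List (Fin n)) (hL : ∀ j ∈ L, j ≠ c) (u : F) : wapp r L u ≠ r c u := by
  intro h
  have hv : r c u ∈ ⋂ i, MFace r i u := by
    refine Set.mem_iInter.2 fun i => ?_
    by_cases hic : i = c
    · subst hic
      rw [← h]
      refine wapp_mem_orbit fun j hj => ?_
      simpa using hL j hj
    · have h1 : r c u = wapp r [c] u := by simp
      rw [h1]
      refine wapp_mem_orbit fun j hj => ?_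
      simp only [List.mem_singleton] at hj
      subst hj
      simp only [Set.mem_compl_iff, Set.mem_singleton_iff]
      exact fun hh => hic hh.symm
  rw [hf u] at hv
  exact hfpf c u hv

lemma perm_sq_one {r : Fin n → Equiv.Perm F} (hinv : ∀ i u, r i (r i u) = u) (c : Fin n) :
    r c * r c = 1 :=
  Equiv.ext fun x => by simp [Equiv.Perm.mul_apply, hinv]

lemma even_closed_J {r : Fin n → Equiv.Perm F}
    (hinv : ∀ i u, r i (r i u) = u) (hfpf : ∀ i u, r i u ≠ u) (hf : IsFaithful r)
    {c p q : Fin n} (hcp : Commute (r c) (r p)) (hcq : Commute (r c) (r q))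
    (hpc : p ≠ c) (hqc : q ≠ c)
    (L : List (Fin n)) (hL : ∀ j ∈ L, j = c ∨ j = p ∨ j = q)
    (u : F) (hcl : wapp r L u = u) : Even L.length := by
  have hc2 : r c * r c = 1 := perm_sq_one hinv c
  have hc2' : (r c) ^ 2 = 1 := by rw [pow_two, hc2]
  obtain ⟨k, hk, hlen⟩ := central_split L (fun j hj hne => by
    rcases hL j hj with rfl | rfl | rfl
    · exact absurd rfl hne
    · exact hcp
    · exact hcq)
  set L' := L.filter (fun j => decide (j ≠ c)) with hL'
  have hL'mem : ∀ j ∈ L', j = p ∨ j = q := by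
    intro j hj
    rw [hL', List.mem_filter] at hj
    rcases hL j hj.1 with hjc | h | h
    · exact absurd hjc (by simpa using hj.2)
    · exact Or.inl h
    · exact Or.inr h
  have hL'ne : ∀ j ∈ L', j ≠ c := by
    intro j hj
    rw [hL', List.mem_filter] at hj
    simpa using hj.2
  have happ : ((r c) ^ k) (wapp r L' u) = u := by
    rw [wapp_def, ← Equiv.Perm.mul_apply, ← hk, ← wapp_def]
    exact hcl
  rcases Nat.even_or_odd k with hke | hko
  · have hkpow : (r c) ^ k = 1 := by
      obtain ⟨m, hm⟩ := hke
      rw [hm, ← two_mul, pow_mul, hc2', one_pow]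
    rw [hkpow, Equiv.Perm.one_apply] at happ
    have hev' : Even (L'.map r).length := by
      refine even_closed_word (perm_sq_one hinv p) (perm_sq_one hinv q) (hfpf p) (hfpf q)
        (L'.map r) (fun g hg => ?_) u ?_
      · obtain ⟨j, hj, rfl⟩ := List.mem_map.1 hg
        rcases hL'mem j hj with rfl | rfl
        · exact Or.inl rfl
        · exact Or.inr rfl
      · rw [← wapp_def]
        exact happ
    rw [List.length_map] at hev'
    have : Even (k + L'.length) := hke.add hev'
    rwa [hlen] at this
  · have hkpow : (r c) ^ k = r c := by
      obtain ⟨m, hm⟩ := hko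
      rw [hm, pow_succ, pow_mul, hc2', one_pow, one_mul]
    rw [hkpow] at happ
    have h5 : wapp r L' u = r c u := by
      have h6 := congrArg (r c) happ
      rwa [hinv] at h6
    exact absurd h5 (not_walk_avoid hfpf hf c L' hL'ne u)

end CDC

/-- The canonical double cover of a faithful `4`-maniplex with non-bipartite `0`- and
`3`-faces has the same number of `0`- and `3`-faces, but twice the number of `1`- and
`2`-faces. -/
theorem stmt12 {F : Type*} [Fintype F] (r : Fin 4 → Equiv.Perm F)
    (hM : IsManiplex 4 r) (hf : IsFaithful r)
    (hnb : ∀ i : Fin 4, ((i : ℕ) = 0 ∨ (i : ℕ) = 3) →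
      ∀ u : F, ¬ FaceBipartite r {i}ᶜ (MFace r i u)) :
    NumFaces (cdc r) 0 = NumFaces r 0 ∧
    NumFaces (cdc r) 3 = NumFaces r 3 ∧
    NumFaces (cdc r) 1 = 2 * NumFaces r 1 ∧
    NumFaces (cdc r) 2 = 2 * NumFaces r 2 := by
  obtain ⟨hne, hinv, hfpf, htrans, hfar⟩ := hM
  have hcomm : ∀ i j : Fin 4, 1 < |(i : ℤ) - (j : ℤ)| → Commute (r i) (r j) := by
    intro i j hij
    have h4 := (hfar i j hij).1
    refine Equiv.ext fun x => ?_
    simp only [Equiv.Perm.mul_apply]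
    have h5 := h4 (r j (r i x))
    rw [hinv j (r i x), hinv i x] at h5
    exact h5
  have hodd : ∀ i : Fin 4, (∀ u : F, ¬ FaceBipartite r {i}ᶜ (MFace r i u)) →
      ∀ u : F, ∃ L : List (Fin 4), (∀ j ∈ L, j ∈ ({i}ᶜ : Set (Fin 4))) ∧
        CDC.wapp r L u = u ∧ Odd L.length := by
    intro i hni u
    by_contra hcon
    push_neg at hcon
    refine hni u ?_
    refine CDC.bipartite_of_even hinv u fun L hL hclosed => ?_
    rcases Nat.even_or_odd L.length with he | ho
    · exact he
    · exact absurd ho (hcon L hL hclosed)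
  have hbip : ∀ i c pp qq : Fin 4, Commute (r c) (r pp) → Commute (r c) (r qq) →
      pp ≠ c → qq ≠ c → (∀ j : Fin 4, j ≠ i → j = c ∨ j = pp ∨ j = qq) →
      ∀ u : F, FaceBipartite r {i}ᶜ (MFace r i u) := by
    intro i c pp qq h1 h2 h3 h4 henum u
    refine CDC.bipartite_of_even hinv u fun L hL hclosed => ?_
    refine CDC.even_closed_J hinv hfpf hf h1 h2 h3 h4 L (fun j hj => ?_) u hclosed
    have hji := hL j hj
    simp only [Set.mem_compl_iff, Set.mem_singleton_iff] at hji
    exact henum j hji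
  refine ⟨?_, ?_, ?_, ?_⟩
  · exact CDC.numfaces_cdc_eq hinv 0 (hodd 0 (hnb 0 (Or.inl rfl)))
  · exact CDC.numfaces_cdc_eq hinv 3 (hodd 3 (hnb 3 (Or.inr rfl)))
  · exact CDC.numfaces_cdc_double hinv 1
      (hbip 1 0 2 3 (hcomm 0 2 (by decide)) (hcomm 0 3 (by decide))
        (by decide) (by decide) (by decide))
  · exact CDC.numfaces_cdc_double hinv 2
      (hbip 2 3 0 1 (hcomm 3 0 (by decide)) (hcomm 3 1 (by decide))
        (by decide) (by decide) (by decide))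
end

section
/- There exists a maniplex of rank 4 with exactly 96 flags that is regular, faithful, thin and satisfies the component intersection property, that has exactly 4 0-faces, 6 1-faces, 6 2-faces and 4 3-faces, and in which every 0-face and every 3-face is non-bipartite. (Such a maniplex is the flag graph of the regular 4-polytope {{4,3}_3, {3,4}_3}.) -/
abbrev F96 := Fin 96

def nth (N x : Nat) : Nat := (N >>> (8*x)) &&& 255

def tblN (N : Nat) : Fin 96 → Nat := fun x => nth N x.1
def tbl96 (N : Nat) : Fin 96 → Fin 96 := fun x => ⟨nth N x.1 % 96, Nat.mod_lt _ (by norm_num)⟩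
def tbl4 (N : Nat) : Fin 96 → Fin 4 := fun x => ⟨nth N x.1 % 4, Nat.mod_lt _ (by norm_num)⟩

def t0 : Fin 96 → Fin 96 := tbl96 560100300943704023725468293550441255037153405463163928540746438531084620431025328087524849526370807914789097896446676872906312288985091451412184859108833356946910017785104881714378126640016573128940375384979171435773013983941361665
def t1 : Fin 96 → Fin 96 := tbl96 517482615223578787570516225960707649371125430595005239824522777014089493831984570599754331475103430561263624836847931094010356459555573391107944430041058628329303719082752453637215665796861368063299091439374961762960347554631386370
def t2 : Fin 96 → Fin 96 := tbl96 572323179902418925100782028547915437778526775347370260080174162054747355343359007820917563074347070515133080156201596381645771222631670740707086644472716049141940908591618225296669974603766994935794553795660693568558025851380762115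
def t3 : Fin 96 → Fin 96 := tbl96 565975769222484995470299060371938861473595553870640636353946382238588435527168838328165227831102906503613814522013682429945505418419861684636159374789487541953364845374046328309736521256099521273874418874784856563359916785763223300
def tt : Fin 4 → Fin 96 → Fin 96 := ![t0, t1, t2, t3]

def la0 : Fin 96 → Fin 96 := tbl96 560100300943704305000073311418272886105182085703226671353490557719964769871327153929207609639467478142624932209807041239517196285129979288759755627847451360651194788636306022226389432172574353486845007816701632682456664349232922625
def la1 : Fin 96 → Fin 96 := tbl96 535723285533721797571510195362587138750154526511554081770445189683274406007515617624682944485477777041559609260715284949761338594214589295522421036337652283190619336039734575187138473855192036907397399819832692057684632607895062530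
def la2 : Fin 96 → Fin 96 := tbl96 554057893197704094251367701857112697518909317987165149286557413603004140095645111730389849562433065550358478408920622890650168787286142060639441357873419895064969022043988389998546515417768914968107857951790514796538707610100762115
def la3 : Fin 96 → Fin 96 := tbl96 565904700582814508039337597562675837212437253005709522242730293194450723173779553983795886469649767565218110197874957963084163892266579299351813174430501762072214866169862548817841048802331707172508535644170054484815893644186355460
def laa : Fin 4 → Fin 96 → Fin 96 := ![la0, la1, la2, la3]

def regP : Fin 96 → Fin 96 := tbl96 535580037819726559871133480003937869665406024071629251151270681622982697941152932988843929248176511787343644157110045301110348178302816841992374374945914465733333006899120984093832001086112640709616965714639338128171381449453207552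
def regA : Fin 96 → Fin 4 := tbl4 6135777876607740211325569584462309296640303685034910964347026456121703649261729013134736526359279479835722951918936589662870789856541212446892917574713476107869117489554958256949240759262242212826902475863668181572907916832342016
def regD : Fin 96 → Nat := tblN 42594361263948678046136983188604920494425926483834962238434601525992361026925161961964318948982729864976187909170039110151522305990714629736560699549619500124427354672625102820460619331065168779377308161386340249537617883488649472

def c0 : Fin 96 → Nat := tblN 578365217499306009151078494863754892711154277256975912468010712328228501005379372464116856216303456853096728772123077544733569473104763764988026373711612024853344365076956064775849692874122887004185634640039796063385287538436604160
def p0 : Fin 96 → Fin 96 := tbl96 578365217499306009151078494863754892711154277256975912468010712328228501005379372464116856216303456853096728772123077544733569473104763764988026373711612024853344365076956064775849692874122887004185634640039796063385287538436604160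
def jf0 : Fin 96 → Fin 4 := tbl4 0
def rho0 : Fin 96 → Nat := tblN 0

def c1 : Fin 96 → Nat := tblN 286126518860787688674204259102485646872312526609992853609494512990966426262321494644494122739036729780697735274781546884215727787478306429489854711483968525864308474319347499835873888879661062817737795731122820733226824127836389376
def p1 : Fin 96 → Fin 96 := tbl96 560100299855030095686661142514663610182647071399830170547474186025632242227906579539207419040408390162503138927159930317070571002780054577416014471013876933114776566372234250986882088638307862614014857478995603940389147778689925120
def jf1 : Fin 96 → Fin 4 := tbl4 0
def rho1 : Fin 96 → Nat := tblN 6088305881425196281766163334985893108328814202875793017610292429376272834970788652976009020616240095185193088234287300595024121168160125385355344382494827463131836106136884972207525397831559549114239773089670239526438397009723648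

def c2 : Fin 96 → Nat := tblN 273950182180890113044294317118872019696601851204780914920780133104270574188855513285934824959881205338279238585085088716886204942825483171091994266766148342603868097548065112916763275799763686855335485692894496934516963301958615296
def p2 : Fin 96 → Fin 96 := tbl96 517482615223578744058671997992039166043386342405285056193459795388667952999126868032418341186365161685154027503654365379164153919909840936976405321853797357598198612692666023353954925428682668494611996537291936766072491899013300480
def jf2 : Fin 96 → Fin 4 := tbl4 6088306244316483998356381477280902757039387100426466805613264589270618800169460322525112592823161380887466707545739496861700645290291023860808838353219525632994435695253503187142609019115883708714715240517719813775373215111118848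
def rho2 : Fin 96 → Nat := tblN 6088306244316483998356381477280902757039387100426466805613264589270618800169460322525112592823161380887466707545739496861700645290291023860808838353219525632994435695253503187142609019115883708714715240517719813775373215111118848

def c3 : Fin 96 → Nat := tblN 60859187821077066958258337847604066562206314243166816328222125244306306641068503462070152265053098258015292165816545483619708059397309836043745504563627629291193820713042671097949833544565070878134650173829453260064893019124400128
def p3 : Fin 96 → Fin 96 := tbl96 559934281809925864501608717680797388283984933797099465176807403196422326073731566400606693931334351089508594020500359441805584530940809782481217649130422556497767441764039409114455696551013605952953011704401326423856852911857336320
def jf3 : Fin 96 → Fin 4 := tbl4 23782446266839720430685366930762263667939879681600524260321063464260998643429520614828108364083675206886710068391289250037840029367763195475605028648113723376538717086365100187763396323449650782185209674563376876649047572676608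
def rho3 : Fin 96 → Nat := tblN 18265010910177136099350096711136391513824267415550595955172293228036132546802205208938248168698480408666197599672240877961788336912025376240186706763859424032480526130572047241479906225977601730191864549928521132222075477887615232

def c4 : Fin 96 → Nat := tblN 286150115508083034960808840167686610652046367066706805847674519760277009490365538739839580783009800643073589814534339569586359242716235069073131419614486201647347185848807164245443108679785738971845370269564149238122505428720025856
def p4 : Fin 96 → Fin 96 := tbl96 572299490354920786698464704103681116902429199734151534154215423996990693574151743799284233844953435641341155585083551749349478077828073158698473723823915406432706446987577447009496158280922039885149599533662000090910845122044363008
def jf4 : Fin 96 → Fin 4 := tbl4 12129233393636734451438346897754752393717555574458858424843804124218074500177514242765345158809076928376400117321119842759502642305176073263786583034776194295893675616869802566139061408578680403772973148628616921907745498863763456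
def rho4 : Fin 96 → Nat := tblN 6064616696818367225719173448877376196858777787229429212421902062109037250088757121382672579404538464188200058660559921379751321152588036631893291517388097147946837808434901283069530704289340201886486574314308460953872749431881728

def c5 : Fin 96 → Nat := tblN 140030951081984650034168883930924503828692047106488217633061491079848906511632774830984378464601875182582908338445836039290001896766043264538810469297570559865369573063552576344969030647627698336736682031168304588972785512048820224
def p5 : Fin 96 → Fin 96 := tbl96 572228421716662392429555793823402983303241366577179489167054462085799933598569787918792717714284986365485618025649397974166706756476131877570510798673777058103476528811118269199807926146799120676418917373827521557505158927903490048
def jf5 : Fin 96 → Fin 4 := tbl4 12129233393636734451438346897754752393717555574458858424843804124218074500177514242765345158809076928376400117321119842759502642305176073263786583034776194295893675616869802566139061408578680403772973148628616921907745498863763456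
def rho5 : Fin 96 → Nat := tblN 12152922578243563507485336783863269305187591990105222230032194491485310085059545774358681600020778559373393146894847221974775442320748162017248635899882924611078673914571786255277056102120899751000726347403978700480311146441605376

def c6 : Fin 96 → Nat := tblN 85236194157375564931005251138035282334360719455989024334886897955211811169693999997961346101202534354700658700136328860362838481575230118970291332418269459740414360637916667375718728231762406763598981405065447684154771770173292800
def p6 : Fin 96 → Fin 96 := tbl96 517481874925208073163518069922520133926985653929163534593359149173373063449780787431740508054188734367585963281945742876395838769985078245853736556948713210663647303466416287970726517542147529978933706479844157907551283778645131520
def jf6 : Fin 96 → Fin 4 := tbl4 6088398781611441777014671968055626728043149182221641023035886347440456571871456161786168203384921110518231748702983072225250144195643550930460893921886407760112499801279272854636955562287244561385913613649627606852030580901609472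
def rho6 : Fin 96 → Nat := tblN 12200302036131149742218594293462349509791326086313981173198181780884687251367116679765254207772038524215400676595837738079029305106718606499252441517829236045063023902386618404630016082077695529223211968240284326289862364640641024

def c7 : Fin 96 → Nat := tblN 18264826195654602196479381893397325391456086700305835010094455775284430888449997648760166512593959411490823135706378325540315355834238583251532990390341621738578098937310090436692178806045799377691562818939056431713505771922653184
def p7 : Fin 96 → Fin 96 := tbl96 559933541511610737527574637063641017310523480339891620715303252161195118968926014899661326835848166354176667797361900677327025419361113516092207582161606940321762349730257320721123751947184640714580398238345487529449717879873208320
def jf7 : Fin 96 → Fin 4 := tbl4 23874983556281762663694429099427221652439751294485591960455737200784635824394665682239343719100613038539146562833485118455350038363155385416130230798472780809458970886166960813494158824739380466154757737599721238801232313778176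
def rho7 : Fin 96 → Nat := tblN 24353224615792214251972362349760781358751711243773458585621644558854169523040075049026990498797549951564671834187217698098509526975874441219509580940141298541164170751802228089444137104700385219571158339126432995618535930249412864

def c8 : Fin 96 → Nat := tblN 286079324473253846492263898459625536080578201577105821376847958711739318096652400204599116161557081146113911381381235603109532726059793417943617249843453049234246118724532168472667243114888799530371514592220121457752392794435092736
def p8 : Fin 96 → Fin 96 := tbl96 565975584147895166264030961290332795386278198334533351138370543494728579683565502217635969020244201389344099549764595339866436432492930772324420834004966092385252701022569753370070049534961230539778749094979915749631792126275748096
def jf8 : Fin 96 → Fin 4 := tbl4 18264641121064773074703499944044348416536509704363961217653641112759203963567236765357305738497782928526037573353267658576091313440979099904554057962282253190871859763180294885812556608594136601860320988962973814212782675170689024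
def rho8 : Fin 96 → Nat := tblN 6088213707021591024901166648014782805512169901454653739217880370919734654522412255119101912832594309508679191117755886192030437813659699968184685987427417730290619921060098295270852202864712200620106996320991271404260891723563008

def c9 : Fin 96 → Nat := tblN 140007354071781339970724260221820048622130251927104329355020679580835916327025253426410698761504039663545454548796961396702200411213131701603336765668455903207003635729140662066539647678177039654551102969125206969934917988367007744
def p9 : Fin 96 → Fin 96 := tbl96 565975306536026969411418030842328498296123251137021242545032415527238550201276315613260459076543208004937322214230568869085810378480244006589144688706853913854827202003326637481936338747913053707648066837843863647336749497569116160
def jf9 : Fin 96 → Fin 4 := tbl4 18264641121064773074703499944044348416536509704363961217653641112759203963567236765357305738497782928526037573353267658576091313440979099904554057962282253190871859763180294885812556608594136601860320988962973814212782675170689024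
def rho9 : Fin 96 → Nat := tblN 12176519588446787306667329983000675913840984104330446756828172800296007489493200908095110933448834404693872279352043186787054558981819825353540030369922245193422456027196983267478377600696271749734346769410661510930699288733286656

def c10 : Fin 96 → Nat := tblN 139936285070631744334663215800999341437714216039765866384834795876155256767007753796722494145047561510550755930014884123545222708206965846771628443167117168588984269544485856872337499702682026969391115350182039221670712526229209344
def p10 : Fin 96 → Fin 96 := tbl96 517459573415981040527115842162994982335246185084153350030613250068452916446894800536953860282905428286206209349387343064170634867120374651325489177976335496825113364553806624854683952057368574867038891638007817511248245154291646720
def jf10 : Fin 96 → Fin 4 := tbl4 6135870413902654898950544518627538919313969320877115417475027230716081503356417760818860103878036076749511039419877798280239074771314785036126007694589619854735317675162517983140087619731606053844589308570222633540665696816529408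
def rho10 : Fin 96 → Nat := tblN 6112088329109558633812765191833785452949243553492666296896156883789541276190314264571828529956247047872435056596287598486796606754034488100406990092586357684361926563221378206169371709060879702360643878366085422368728618295689216

def c11 : Fin 96 → Nat := tblN 30394152126586208244183208133889963103350088908656572703238739266337302734610524759078473594779995016030780807822434728330485366170158993037255476936468896722916196222090564974570005853724058626084074688980062316124446948568596480
def p11 : Fin 96 → Fin 96 := tbl96 565975121461404044860814495076166043696558623561963715513078801873320239914339921351620332690124859101226811054376949316308919679609870559214238011735221281613626009860599099311194948951088773194074617054031978129971088482742829056
def jf11 : Fin 96 → Fin 4 := tbl4 18264733658359687425351033734864868537182290352969298197387216656808420126947256747814344842204965845576318753674845974352175438749307849175771972027416722781584310644438290690019730185336589663728382592843503255096394191588098048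
def rho11 : Fin 96 → Nat := tblN 30417748776722158032666629670669481608036860216081038063163992733624923928282725473205904364835639982266559620486579175955169765255402609226662286888403392311190351465362641125528430096864315143256657427724474242926242399317459200

def c12 : Fin 96 → Nat := tblN 60883061717382458797005592711931680513919055667307089450822921137072643621940203378898010693108581105433944166611797911496238400473343814667063634108750137702126905243105077284234853708678537061812399131974947469227120072956444928
def p12 : Fin 96 → Fin 96 := tbl96 565974381163033784340751806178114783434886091064643655415977056317902379982816167228465033082271732790742574691158419005895986401065989752684282027160051559643751480090365070197735550410431561266426879838061834326781456470513942784
def jf12 : Fin 96 → Fin 4 := tbl4 18264826195654580735126182752924805511280553047059874445811988758850537885691335676094680786517091641463049223877590173988105909070389263865903213458122187781218644462196376765718764439081596692857993075587632838780245728062078976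
def rho12 : Fin 96 → Nat := tblN 24329442892472947960516597707878862139642617610083940825721380237813832654945185078899240777302000124943818516823454044233802643977679008440378053096731340690705990095484781424664869062234969164821915213608439940245431771979579392

def c13 : Fin 96 → Nat := tblN 30441531221582506341840266163757390896109265126282575522563902128302093393012282459408927151316783865811337699100497151825859847432777448587375126703592496237800493905022730686934023686348813362296723367818896810799829998605762560
def p13 : Fin 96 → Fin 96 := tbl96 565974381163033784340751806178114783434886091064643655415977056317902379982816167228465033082271732790742574691158419005895986401065989752681735732189633447060474588557752433299900930168209465948300255609213798576171059350989832192
def jf13 : Fin 96 → Fin 4 := tbl4 18264826195654580735126182752924805511280553047059874445811988758850537885691335676094680786517091641463049223877590173988105909070389263865903213458122187781218644462196376765718764439081596692857993075587632838780245728062078976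
def rho13 : Fin 96 → Nat := tblN 30417748773898144242282761042864755247971431812959733843331672667190105489915973731875249797918240220129011605057741344828826765145839133825733397479226168153837826201621666396872394460066528713936154986698110179771870168989303040

def c14 : Fin 96 → Nat := tblN 18264918370058185991991179459491151220585226411634585715989819608162258159927121419541079881719982305554754282815115446963624576336977330301149040017088175743225765044792125053784635855961983530555170913556176339645165809568841984
def p14 : Fin 96 → Fin 96 := tbl96 517458185356529829400856187959840365359496834248473781842007443689961096025793621854900348532868651994277680789136571592858066909560708702812650746531855878572236355421814717493628912883497662378726570332665856065086396254302241024
def jf14 : Fin 96 → Fin 4 := tbl4 6135777876607718750299859774186415206103113929901339379609381728184994182015281145813499471754980999525185651020947005575209951908148428719504146677105802023058916695114690029080543336522705842434134072874437528679672571614003200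
def rho14 : Fin 96 → Nat := tblN 24353224977266022512139565491580788111519902020196898745627109617412639081908194722105939124176361412776528715242276454500299203862054281924982102735731945449893474267790061358452087746397681790866898356724347784103786704260890624

def c15 : Fin 96 → Nat := tblN 0
def p15 : Fin 96 → Fin 96 := tbl96 517458185356529741784745026419998196662901796638139787643910854062727143031267705760175062599766379036099447410114027756909220546367131327652804728712422955522331821518248045511785798127976099792498892142182320191303258757409013760
def jf15 : Fin 96 → Fin 4 := tbl4 6135777876607740043001230767673689184000377123694151653192859685286020958655664004975660173341852499787098805615578620281697794046824419594996299502264726041050163634915104304416894350748842382607077799098154244491856238367277056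
def rho15 : Fin 96 → Nat := tblN 42594361263948678046136983188604920494425926483834962238434601525992361026925161961964318948982729864976187909170039110151522305990714629736560699549619500124427354672625102820460619331065168779377308161386340249537617883488649472

def ocT : Nat → Fin 96 → Nat :=
  fun m => match m with
  | 0 => c0
  | 1 => c1
  | 2 => c2
  | 3 => c3
  | 4 => c4
  | 5 => c5
  | 6 => c6
  | 7 => c7
  | 8 => c8
  | 9 => c9
  | 10 => c10
  | 11 => c11
  | 12 => c12
  | 13 => c13
  | 14 => c14
  | _ => c15

def opT : Nat → Fin 96 → Fin 96 :=
  fun m => match m with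
  | 0 => p0
  | 1 => p1
  | 2 => p2
  | 3 => p3
  | 4 => p4
  | 5 => p5
  | 6 => p6
  | 7 => p7
  | 8 => p8
  | 9 => p9
  | 10 => p10
  | 11 => p11
  | 12 => p12
  | 13 => p13
  | 14 => p14
  | _ => p15

def ojfT : Nat → Fin 96 → Fin 4 :=
  fun m => match m with
  | 0 => jf0
  | 1 => jf1
  | 2 => jf2
  | 3 => jf3
  | 4 => jf4
  | 5 => jf5
  | 6 => jf6
  | 7 => jf7
  | 8 => jf8
  | 9 => jf9
  | 10 => jf10
  | 11 => jf11
  | 12 => jf12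
  | 13 => jf13
  | 14 => jf14
  | _ => jf15

def orhoT : Nat → Fin 96 → Nat :=
  fun m => match m with
  | 0 => rho0
  | 1 => rho1
  | 2 => rho2
  | 3 => rho3
  | 4 => rho4
  | 5 => rho5
  | 6 => rho6
  | 7 => rho7
  | 8 => rho8
  | 9 => rho9
  | 10 => rho10
  | 11 => rho11
  | 12 => rho12
  | 13 => rho13
  | 14 => rho14
  | _ => rho15

def faceRep0 : Fin 4 → Fin 96 := fun k => ⟨nth 235405568 k.1 % 96, Nat.mod_lt _ (by norm_num)⟩
def faceRep1 : Fin 6 → Fin 96 := fun k => ⟨nth 22063431877120 k.1 % 96, Nat.mod_lt _ (by norm_num)⟩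
def faceRep2 : Fin 6 → Fin 96 := fun k => ⟨nth 30893918454528 k.1 % 96, Nat.mod_lt _ (by norm_num)⟩
def faceRep3 : Fin 4 → Fin 96 := fun k => ⟨nth 403440640 k.1 % 96, Nat.mod_lt _ (by norm_num)⟩

def thinW1_0 : Fin 1 → Fin 6 → Fin 96 := fun a b => ⟨nth 22063431877120 (a.1*6+b.1) % 96, Nat.mod_lt _ (by norm_num)⟩
def thinW2_0 : Fin 1 → Fin 6 → Fin 96 := fun a b => ⟨nth 34244211378177 (a.1*6+b.1) % 96, Nat.mod_lt _ (by norm_num)⟩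
def thinW1_1 : Fin 4 → Fin 6 → Fin 96 := fun a b => ⟨nth 2090057947975856895405907731422203247817191899818187358976 (a.1*6+b.1) % 96, Nat.mod_lt _ (by norm_num)⟩
def thinW2_1 : Fin 4 → Fin 6 → Fin 96 := fun a b => ⟨nth 2287951184516401618301458669525176029532430335984751020802 (a.1*6+b.1) % 96, Nat.mod_lt _ (by norm_num)⟩
def thinW1_2 : Fin 6 → Fin 4 → Fin 96 := fun a b => ⟨nth 2238225855229495509278551230522170106370059406143071716352 (a.1*4+b.1) % 96, Nat.mod_lt _ (by norm_num)⟩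
def thinW2_2 : Fin 6 → Fin 4 → Fin 96 := fun a b => ⟨nth 2264481097904464313633481370696815488149708252354661059843 (a.1*4+b.1) % 96, Nat.mod_lt _ (by norm_num)⟩
def thinW1_3 : Fin 6 → Fin 1 → Fin 96 := fun a b => ⟨nth 30893918454528 (a.1*1+b.1) % 96, Nat.mod_lt _ (by norm_num)⟩
def thinW2_3 : Fin 6 → Fin 1 → Fin 96 := fun a b => ⟨nth 54095617985540 (a.1*1+b.1) % 96, Nat.mod_lt _ (by norm_num)⟩
def orep0 : Nat → Fin 96 := fun k => ⟨nth 578365217499306009151078494863754892711154277256975912468010712328228501005379372464116856216303456853096728772123077544733569473104763764988026373711612024853344365076956064775849692874122887004185634640039796063385287538436604160 k % 96, Nat.mod_lt _ (by norm_num)⟩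
def orep1 : Nat → Fin 96 := fun k => ⟨nth 14215019665961772837081216429190899040475310263608289589043947255518856532767995907864125629764992453347370692968960 k % 96, Nat.mod_lt _ (by norm_num)⟩
def orep2 : Nat → Fin 96 := fun k => ⟨nth 13751462083704993901946430157936293642443146898185272603107907856962194777681813355036093552776815648785144737890560 k % 96, Nat.mod_lt _ (by norm_num)⟩
def orep3 : Nat → Fin 96 := fun k => ⟨nth 15843115055361245083479573248 k % 96, Nat.mod_lt _ (by norm_num)⟩
def orep4 : Nat → Fin 96 := fun k => ⟨nth 14522838509634593549441429368648757587973638999569409853025277857095276483037227339079912994485261274100686238384384 k % 96, Nat.mod_lt _ (by norm_num)⟩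
def orep5 : Nat → Fin 96 := fun k => ⟨nth 2238234147727210102944733704280096534489659246920258028032 k % 96, Nat.mod_lt _ (by norm_num)⟩
def orep6 : Nat → Fin 96 := fun k => ⟨nth 88041664077164827589510065904253403392 k % 96, Nat.mod_lt _ (by norm_num)⟩
def orep7 : Nat → Fin 96 := fun k => ⟨nth 403440640 k % 96, Nat.mod_lt _ (by norm_num)⟩
def orep8 : Nat → Fin 96 := fun k => ⟨nth 14368320875043834612536816457069753576154780010742996450826812523578575566482636971750559273465550665258708175552768 k % 96, Nat.mod_lt _ (by norm_num)⟩
def orep9 : Nat → Fin 96 := fun k => ⟨nth 2213809627356055702743828497283231572755235758133305606656 k % 96, Nat.mod_lt _ (by norm_num)⟩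
def orep10 : Nat → Fin 96 := fun k => ⟨nth 2091403788012800266589988036664200662273359291590568509696 k % 96, Nat.mod_lt _ (by norm_num)⟩
def orep11 : Nat → Fin 96 := fun k => ⟨nth 30893918454528 k % 96, Nat.mod_lt _ (by norm_num)⟩
def orep12 : Nat → Fin 96 := fun k => ⟨nth 11488545215490189009589764352 k % 96, Nat.mod_lt _ (by norm_num)⟩
def orep13 : Nat → Fin 96 := fun k => ⟨nth 22063431877120 k % 96, Nat.mod_lt _ (by norm_num)⟩
def orep14 : Nat → Fin 96 := fun k => ⟨nth 235405568 k % 96, Nat.mod_lt _ (by norm_num)⟩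
def orep15 : Nat → Fin 96 := fun k => ⟨nth 0 k % 96, Nat.mod_lt _ (by norm_num)⟩
def orepT : Nat → Nat → Fin 96 :=
  fun m => match m with
  | 0 => orep0
  | 1 => orep1
  | 2 => orep2
  | 3 => orep3
  | 4 => orep4
  | 5 => orep5
  | 6 => orep6
  | 7 => orep7
  | 8 => orep8
  | 9 => orep9
  | 10 => orep10
  | 11 => orep11
  | 12 => orep12
  | 13 => orep13
  | 14 => orep14
  | _ => orep15

set_option maxRecDepth 100000
set_option maxHeartbeats 2000000

section Generic

variable {n : ℕ} {F : Type*} (r : Fin n → Equiv.Perm F)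

theorem mem_orbit_self (J : Set (Fin n)) (u : F) : u ∈ MOrbit r J u :=
  ⟨1, Subgroup.one_mem _, rfl⟩

theorem step_mem {J : Set (Fin n)} {j : Fin n} (hj : j ∈ J) {u x : F}
    (hx : x ∈ MOrbit r J u) : r j x ∈ MOrbit r J u := by
  obtain ⟨g, hg, rfl⟩ := hx
  exact ⟨r j * g, mul_mem (Subgroup.subset_closure ⟨j, hj, rfl⟩) hg, rfl⟩

theorem orbit_subset {J : Set (Fin n)} {u : F} {S : Set F} (hu : u ∈ S)
    (hcl : ∀ j ∈ J, ∀ x : F, x ∈ S ↔ r j x ∈ S) : MOrbit r J u ⊆ S := by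
  rintro v ⟨g, hg, rfl⟩
  have key : ∀ x, x ∈ S ↔ g x ∈ S := by
    refine Subgroup.closure_induction (p := fun g _ => ∀ x, x ∈ S ↔ g x ∈ S) ?_ ?_ ?_ ?_ hg
    · rintro _ ⟨j, hj, rfl⟩ x; exact hcl j hj x
    · intro x; exact Iff.rfl
    · intro a b _ _ ha hb x; exact (hb x).trans (ha (b x))
    · intro a _ ha x
      have := (ha (a⁻¹ x)).symm
      simpa using this
  exact (key u).mp hu

theorem orbit_eq_of_mem {J : Set (Fin n)} {u v : F} (h : v ∈ MOrbit r J u) :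
    MOrbit r J v = MOrbit r J u := by
  obtain ⟨g, hg, rfl⟩ := h
  ext w
  constructor
  · rintro ⟨h', hh, rfl⟩; exact ⟨h' * g, mul_mem hh hg, rfl⟩
  · rintro ⟨h', hh, rfl⟩
    refine ⟨h' * g⁻¹, mul_mem hh (inv_mem hg), ?_⟩
    simp [Equiv.Perm.mul_apply]

theorem orbit_eq_fiber
    (J : Set (Fin n)) (c : F → ℕ) (p : F → F) (jf : F → Fin n) (ρ : F → ℕ)
    (hcl : ∀ j ∈ J, ∀ x, c (r j x) = c x)
    (hcert : ∀ x, p x = x ∨ (jf x ∈ J ∧ r (jf x) (p x) = x ∧ ρ (p x) < ρ x))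
    (hbase : ∀ x y, p x = x → p y = y → c x = c y → x = y) (u : F) :
    MOrbit r J u = {x | c x = c u} := by
  have claim : ∀ N x, ρ x < N → ∃ b, p b = b ∧ c b = c x ∧ x ∈ MOrbit r J b := by
    intro N
    induction N with
    | zero => intro x h; exact absurd h (Nat.not_lt_zero _)
    | succ N ih =>
      intro x hx
      rcases hcert x with hpx | ⟨hjf, hrx, hρ⟩
      · exact ⟨x, hpx, rfl, mem_orbit_self r J x⟩
      · obtain ⟨b, hb, hcb, hmem⟩ := ih (p x) (by omega)
        refine ⟨b, hb, ?_, ?_⟩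
        · rw [hcb, ← hcl _ hjf (p x), hrx]
        · rw [← hrx]; exact step_mem r hjf hmem
  ext x
  simp only [Set.mem_setOf_eq]
  constructor
  · intro hx
    exact orbit_subset r (S := {y | c y = c u}) rfl
      (fun j hj y => by simp only [Set.mem_setOf_eq, hcl j hj y]) hx
  · intro hx
    obtain ⟨b, hb, hcb, hmem⟩ := claim (ρ x + 1) x (Nat.lt_succ_self _)
    obtain ⟨b', hb', hcb', hmem'⟩ := claim (ρ u + 1) u (Nat.lt_succ_self _)
    have hbb : b = b' := hbase _ _ hb hb' (by rw [hcb, hcb', hx])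
    subst hbb
    rw [orbit_eq_of_mem r hmem']
    exact hmem

theorem auto_symm {φ : Equiv.Perm F} (h : IsManiplexAuto r φ) :
    IsManiplexAuto r φ.symm := by
  intro i u
  apply φ.injective
  rw [Equiv.apply_symm_apply, h, Equiv.apply_symm_apply]

theorem auto_trans {φ ψ : Equiv.Perm F} (hφ : IsManiplexAuto r φ) (hψ : IsManiplexAuto r ψ) :
    IsManiplexAuto r (φ.trans ψ) := by
  intro i u
  simp only [Equiv.trans_apply]
  rw [hφ, hψ]

theorem auto_commute_closure {φ : Equiv.Perm F} (hφ : IsManiplexAuto r φ) {J : Set (Fin n)}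
    {g : Equiv.Perm F} (hg : g ∈ Subgroup.closure (r '' J)) : ∀ x, φ (g x) = g (φ x) := by
  refine Subgroup.closure_induction (p := fun g _ => ∀ x, φ (g x) = g (φ x)) ?_ ?_ ?_ ?_ hg
  · rintro _ ⟨j, hj, rfl⟩ x; exact hφ j x
  · intro x; rfl
  · intro a b _ _ ha hb x
    simp only [Equiv.Perm.mul_apply, hb, ha]
  · intro a _ ha x
    have h1 := ha (a⁻¹ x)
    rw [Equiv.Perm.inv_def, Equiv.apply_symm_apply] at h1
    apply Equiv.injective a
    rw [Equiv.Perm.inv_def, Equiv.apply_symm_apply, h1]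

theorem auto_orbit {φ : Equiv.Perm F} (hφ : IsManiplexAuto r φ) {J : Set (Fin n)} {u v : F}
    (h : v ∈ MOrbit r J u) : φ v ∈ MOrbit r J (φ u) := by
  obtain ⟨g, hg, rfl⟩ := h
  exact ⟨g, hg, auto_commute_closure r hφ hg u⟩

theorem not_bip (J : Set (Fin n)) (w : List (Fin n)) (hw : ∀ j ∈ w, j ∈ J)
    (hodd : w.length % 2 = 1) (u : F) (hid : w.foldr (fun j y => r j y) u = u) :
    ¬ FaceBipartite r J (MOrbit r J u) := by
  rintro ⟨f, hf⟩
  have key : ∀ (l : List (Fin n)), (∀ j ∈ l, j ∈ J) → ∀ x, x ∈ MOrbit r J u →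
      l.foldr (fun j y => r j y) x ∈ MOrbit r J u ∧
      f (l.foldr (fun j y => r j y) x) = f x + (l.length : ZMod 2) := by
    intro l
    induction l with
    | nil =>
      intro _ x hx
      refine ⟨hx, ?_⟩
      simp
    | cons a t ih =>
      intro hl x hx
      obtain ⟨hmem, hval⟩ := ih (fun j hj => hl j (List.mem_cons_of_mem _ hj)) x hx
      simp only [List.foldr_cons, List.length_cons]
      refine ⟨step_mem r (hl a List.mem_cons_self) hmem, ?_⟩
      rw [hf a (hl a List.mem_cons_self) _ hmem, hval]
      push_cast
      ring
  obtain ⟨_, hval⟩ := key w hw u (mem_orbit_self r J u)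
  rw [hid] at hval
  have h0 : (w.length : ZMod 2) = 0 := left_eq_add.mp hval
  rw [← ZMod.natCast_mod, hodd] at h0
  simp at h0

end Generic

-- decidable facts about the tables
theorem tt_invol : ∀ (i : Fin 4) (x : F96), tt i (tt i x) = x := by decide

def rr (i : Fin 4) : Equiv.Perm F96 :=
  ⟨tt i, tt i, fun x => tt_invol i x, fun x => tt_invol i x⟩

theorem rr_apply (i : Fin 4) (x : F96) : rr i x = tt i x := rfl

def bitmask (T : Finset (Fin 4)) : ℕ :=
  (if (0:Fin 4) ∈ T then 1 else 0) + (if 1 ∈ T then 2 else 0) +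
  (if 2 ∈ T then 4 else 0) + (if 3 ∈ T then 8 else 0)

def Jset : ℕ → Finset (Fin 4) :=
  fun m => match m with
  | 0 => ∅ | 1 => {0} | 2 => {1} | 3 => {0,1} | 4 => {2} | 5 => {0,2} | 6 => {1,2} | 7 => {0,1,2}
  | 8 => {3} | 9 => {0,3} | 10 => {1,3} | 11 => {0,1,3} | 12 => {2,3} | 13 => {0,2,3}
  | 14 => {1,2,3} | _ => Finset.univ

theorem hbm : ∀ T : Finset (Fin 4), Jset (bitmask T) = T := by decide
theorem hbmlt : ∀ T : Finset (Fin 4), bitmask T < 16 := by decide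
theorem hcl_all : ∀ m : Fin 16, ∀ j ∈ Jset m.1, ∀ x, ocT m.1 (tt j x) = ocT m.1 x := by decide
theorem hcert_all : ∀ m : Fin 16, ∀ x, opT m.1 x = x ∨
    (ojfT m.1 x ∈ Jset m.1 ∧ tt (ojfT m.1 x) (opT m.1 x) = x ∧
     orhoT m.1 (opT m.1 x) < orhoT m.1 x) := by decide
theorem hroot : ∀ m : Fin 16, ∀ x, opT m.1 x = x → orepT m.1 (ocT m.1 x) = x := by decide

theorem orbit_char (T : Finset (Fin 4)) (u : F96) :
    MOrbit rr (↑T) u = {x | ocT (bitmask T) x = ocT (bitmask T) u} := by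
  have hm : (⟨bitmask T, hbmlt T⟩ : Fin 16).1 = bitmask T := rfl
  have hJ : Jset (bitmask T) = T := hbm T
  refine orbit_eq_fiber rr (↑T) (ocT (bitmask T)) (opT (bitmask T)) (ojfT (bitmask T))
    (orhoT (bitmask T)) ?_ ?_ ?_ u
  · intro j hj x
    exact hcl_all ⟨bitmask T, hbmlt T⟩ j (by rwa [hm, hJ, ← Finset.mem_coe]) x
  · intro x
    rcases hcert_all ⟨bitmask T, hbmlt T⟩ x with h | ⟨h1, h2, h3⟩
    · exact Or.inl h
    · have h1' : ojfT (bitmask T) x ∈ Jset (bitmask T) := h1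
      rw [hJ] at h1'
      exact Or.inr ⟨Finset.mem_coe.mpr h1', h2, h3⟩
  · intro x y hx hy hcxy
    have ex := hroot ⟨bitmask T, hbmlt T⟩ x hx
    have ey := hroot ⟨bitmask T, hbmlt T⟩ y hy
    rw [hm] at ex ey
    rw [← ex, ← ey, hcxy]

def cF : Fin 4 → F96 → ℕ := ![c14, c13, c11, c7]

theorem hcF : ∀ (i : Fin 4) (x : F96), ocT (bitmask ({i} : Finset (Fin 4))ᶜ) x = cF i x := by decide

theorem face_char (i : Fin 4) (u : F96) :
    MFace rr i u = {x | cF i x = cF i u} := by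
  have hset : ({i}ᶜ : Set (Fin 4)) = (↑(({i} : Finset (Fin 4))ᶜ) : Set (Fin 4)) := by simp
  show MOrbit rr ({i}ᶜ : Set (Fin 4)) u = _
  rw [hset, orbit_char]
  ext x
  simp only [Set.mem_setOf_eq, hcF]

-- automorphisms
theorem hlainv : ∀ (s : Fin 4) (u : F96), laa s (laa s u) = u := by decide
theorem hauto : ∀ (s i : Fin 4) (u : F96), laa s (tt i u) = tt i (laa s u) := by decide
theorem hreg : ∀ v : F96, v = 0 ∨ (laa (regA v) (regP v) = v ∧ regD (regP v) < regD v) := by decide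

def laE (s : Fin 4) : Equiv.Perm F96 :=
  ⟨laa s, laa s, fun x => hlainv s x, fun x => hlainv s x⟩

theorem laE_auto (s : Fin 4) : IsManiplexAuto rr (laE s) := fun i u => hauto s i u

theorem exists_auto_0 : ∀ v : F96, ∃ φ : Equiv.Perm F96, IsManiplexAuto rr φ ∧ φ 0 = v := by
  have key : ∀ (N : ℕ) (v : F96), regD v < N → ∃ φ : Equiv.Perm F96, IsManiplexAuto rr φ ∧ φ 0 = v := by
    intro N
    induction N with
    | zero => intro v h; exact absurd h (Nat.not_lt_zero _)
    | succ N ih =>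
      intro v hv
      rcases hreg v with rfl | ⟨h1, h2⟩
      · exact ⟨Equiv.refl _, fun i u => rfl, rfl⟩
      · obtain ⟨φ, hφ, h0⟩ := ih (regP v) (by omega)
        refine ⟨φ.trans (laE (regA v)), auto_trans rr hφ (laE_auto _), ?_⟩
        simp only [Equiv.trans_apply, h0]
        exact h1
  exact fun v => key (regD v + 1) v (Nat.lt_succ_self _)

theorem exists_auto_to (u : F96) : ∃ φ : Equiv.Perm F96, IsManiplexAuto rr φ ∧ φ u = 0 := by
  obtain ⟨φ, hφ, h0⟩ := exists_auto_0 u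
  exact ⟨φ.symm, auto_symm rr hφ, by rw [← h0, Equiv.symm_apply_apply]⟩

theorem rr_regular : IsRegularManiplex rr := by
  intro u v
  obtain ⟨φu, hφu, hu⟩ := exists_auto_to u
  obtain ⟨φv, hφv, hv⟩ := exists_auto_0 v
  exact ⟨φu.trans φv, auto_trans rr hφu hφv, by simp only [Equiv.trans_apply, hu, hv]⟩

-- faithfulness / CIP decidable cores
theorem hfaith0 : ∀ v : F96, (∀ i : Fin 4, cF i v = cF i 0) → v = 0 := by decide
theorem hcip0 : ∀ (T : Finset (Fin 4)) (v : F96), (∀ t ∈ T, cF t v = cF t 0) →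
    ocT (bitmask Tᶜ) v = ocT (bitmask Tᶜ) 0 := by decide

-- more decidable cores
theorem hneq_tt : ∀ (i : Fin 4) (u : F96), tt i u ≠ u := by decide
theorem hcomm_tt : ∀ i j : Fin 4, 1 < |(i : ℤ) - (j : ℤ)| →
    (∀ u : F96, tt i (tt j (tt i (tt j u))) = u) ∧ ∀ u : F96, tt i (tt j u) ≠ u := by decide
theorem huniv : ∀ u v : F96,
    ocT (bitmask (Finset.univ : Finset (Fin 4))) v = ocT (bitmask Finset.univ) u := by decide
theorem hc15 : ∀ x : F96, c15 x = 0 := by decide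

theorem univ_fiber (x0 : F96) : (Set.univ : Set F96) = {x | c15 x = c15 x0} := by
  ext x; simp [hc15]

theorem rank_face_fiber (t : Fin 4) (k : ℤ) (hk : (t : ℤ) = k) (Fm : Set F96) (u1 : F96)
    (hr : Fm = MOrbit rr {j : Fin 4 | (j : ℤ) ≠ k} u1) (x0 : F96) (hx0 : x0 ∈ Fm) :
    Fm = {x | cF t x = cF t x0} := by
  subst hk
  have hset : {j : Fin 4 | (j : ℤ) ≠ (t : ℤ)} = ({t}ᶜ : Set (Fin 4)) := by
    ext jj
    simp only [Set.mem_setOf_eq, Set.mem_compl_iff, Set.mem_singleton_iff, ne_eq]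
    constructor
    · intro h heq; exact h (by rw [heq])
    · intro h heq; exact h (Fin.ext (by exact_mod_cast heq))
  have hFm : Fm = MFace rr t u1 := by rw [hr, hset]; rfl
  rw [hFm, face_char] at hx0
  rw [hFm, face_char]
  ext x
  simp only [Set.mem_setOf_eq]
  rw [hx0]

theorem thin_helper (i : Fin 4) (cm cp : F96 → ℕ)
    (Fm Fp : Set F96) (x0 : F96)
    (hFm : Fm = {x | cm x = cm x0}) (hFp : Fp = {x | cp x = cp x0})
    (w1 w2 : F96)
    (hw1m : cm w1 = cm x0) (hw1p : cp w1 = cp x0)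
    (hw2m : cm w2 = cm x0) (hw2p : cp w2 = cp x0)
    (hne : cF i w1 ≠ cF i w2)
    (hall : ∀ x, cm x = cm x0 → cp x = cp x0 → cF i x = cF i w1 ∨ cF i x = cF i w2) :
    ∃ O₁ O₂ : Set F96, O₁ ≠ O₂ ∧
      {O : Set F96 | (∃ u, O = MFace rr i u) ∧ (O ∩ (Fm ∩ Fp)).Nonempty} = {O₁, O₂} := by
  refine ⟨MFace rr i w1, MFace rr i w2, ?_, ?_⟩
  · intro heq
    have h1 : w1 ∈ MFace rr i w1 := by rw [face_char]; exact rfl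
    rw [heq, face_char] at h1
    exact hne h1
  · ext O
    simp only [Set.mem_setOf_eq, Set.mem_insert_iff, Set.mem_singleton_iff]
    constructor
    · rintro ⟨⟨u0, rfl⟩, y, hyO, hyM, hyP⟩
      rw [face_char] at hyO
      rw [hFm] at hyM
      rw [hFp] at hyP
      rcases hall y hyM hyP with h | h
      · left
        rw [hyO] at h
        rw [face_char, face_char, h]
      · right
        rw [hyO] at h
        rw [face_char, face_char, h]
    · intro h
      rcases h with rfl | rfl
      · refine ⟨⟨w1, rfl⟩, w1, ?_, ?_, ?_⟩
        · rw [face_char]; exact rfl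
        · rw [hFm]; exact hw1m
        · rw [hFp]; exact hw1p
      · refine ⟨⟨w2, rfl⟩, w2, ?_, ?_, ?_⟩
        · rw [face_char]; exact rfl
        · rw [hFm]; exact hw2m
        · rw [hFp]; exact hw2p

-- thin decidable cores
theorem hlt15 : ∀ x : F96, c15 x < 1 := by decide
theorem hltF : ∀ x : F96, cF 0 x < 4 ∧ cF 1 x < 6 ∧ cF 2 x < 6 ∧ cF 3 x < 4 := by decide

theorem thinCore0 : ∀ (a : Fin 1) (b : Fin 6),
    (∀ x : F96, ¬(c15 x = a.1 ∧ cF 1 x = b.1)) ∨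
    (c15 (thinW1_0 a b) = a.1 ∧ cF 1 (thinW1_0 a b) = b.1 ∧
     c15 (thinW2_0 a b) = a.1 ∧ cF 1 (thinW2_0 a b) = b.1 ∧
     cF 0 (thinW1_0 a b) ≠ cF 0 (thinW2_0 a b) ∧
     ∀ x : F96, c15 x = a.1 → cF 1 x = b.1 →
       cF 0 x = cF 0 (thinW1_0 a b) ∨ cF 0 x = cF 0 (thinW2_0 a b)) := by decide

theorem thinCore1 : ∀ (a : Fin 4) (b : Fin 6),
    (∀ x : F96, ¬(cF 0 x = a.1 ∧ cF 2 x = b.1)) ∨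
    (cF 0 (thinW1_1 a b) = a.1 ∧ cF 2 (thinW1_1 a b) = b.1 ∧
     cF 0 (thinW2_1 a b) = a.1 ∧ cF 2 (thinW2_1 a b) = b.1 ∧
     cF 1 (thinW1_1 a b) ≠ cF 1 (thinW2_1 a b) ∧
     ∀ x : F96, cF 0 x = a.1 → cF 2 x = b.1 →
       cF 1 x = cF 1 (thinW1_1 a b) ∨ cF 1 x = cF 1 (thinW2_1 a b)) := by decide

theorem thinCore2 : ∀ (a : Fin 6) (b : Fin 4),
    (∀ x : F96, ¬(cF 1 x = a.1 ∧ cF 3 x = b.1)) ∨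
    (cF 1 (thinW1_2 a b) = a.1 ∧ cF 3 (thinW1_2 a b) = b.1 ∧
     cF 1 (thinW2_2 a b) = a.1 ∧ cF 3 (thinW2_2 a b) = b.1 ∧
     cF 2 (thinW1_2 a b) ≠ cF 2 (thinW2_2 a b) ∧
     ∀ x : F96, cF 1 x = a.1 → cF 3 x = b.1 →
       cF 2 x = cF 2 (thinW1_2 a b) ∨ cF 2 x = cF 2 (thinW2_2 a b)) := by decide

theorem thinCore3 : ∀ (a : Fin 6) (b : Fin 1),
    (∀ x : F96, ¬(cF 2 x = a.1 ∧ c15 x = b.1)) ∨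
    (cF 2 (thinW1_3 a b) = a.1 ∧ c15 (thinW1_3 a b) = b.1 ∧
     cF 2 (thinW2_3 a b) = a.1 ∧ c15 (thinW2_3 a b) = b.1 ∧
     cF 3 (thinW1_3 a b) ≠ cF 3 (thinW2_3 a b) ∧
     ∀ x : F96, cF 2 x = a.1 → c15 x = b.1 →
       cF 3 x = cF 3 (thinW1_3 a b) ∨ cF 3 x = cF 3 (thinW2_3 a b)) := by decide

-- numfaces
theorem numfaces_eq (i : Fin 4) (m : ℕ) (hlt : ∀ x : F96, cF i x < m)
    (rep : Fin m → F96) (hrep : ∀ k : Fin m, cF i (rep k) = k.1) :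
    NumFaces rr i = m := by
  have hset : {O : Set F96 | ∃ u, O = MFace rr i u} =
      (fun k : Fin m => {x : F96 | cF i x = k.1}) '' Set.univ := by
    ext O
    simp only [Set.mem_setOf_eq, Set.image_univ, Set.mem_range]
    constructor
    · rintro ⟨u, rfl⟩; exact ⟨⟨cF i u, hlt u⟩, (face_char i u).symm⟩
    · rintro ⟨k, rfl⟩; exact ⟨rep k, by rw [face_char, hrep]⟩
  have hinj : Function.Injective (fun k : Fin m => {x : F96 | cF i x = k.1}) := by
    intro k k' h
    have h' : {x : F96 | cF i x = k.1} = {x : F96 | cF i x = k'.1} := h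
    have hk : rep k ∈ {x : F96 | cF i x = k.1} := hrep k
    rw [h'] at hk
    exact Fin.ext (by rw [← hrep k]; exact hk)
  rw [NumFaces, hset, Set.ncard_image_of_injective _ hinj, Set.ncard_univ,
    Nat.card_eq_fintype_card, Fintype.card_fin]

theorem hrep0 : ∀ k : Fin 4, cF 0 (faceRep0 k) = k.1 := by decide
theorem hrep1 : ∀ k : Fin 6, cF 1 (faceRep1 k) = k.1 := by decide
theorem hrep2 : ∀ k : Fin 6, cF 2 (faceRep2 k) = k.1 := by decide
theorem hrep3 : ∀ k : Fin 4, cF 3 (faceRep3 k) = k.1 := by decide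

-- odd words
theorem oddw0 : ∀ x : F96,
    ([1,2,3,1,2,3,1,2,3] : List (Fin 4)).foldr (fun j y => tt j y) x = x := by decide
theorem oddw3 : ∀ x : F96,
    ([0,1,2,0,1,2,0,1,2] : List (Fin 4)).foldr (fun j y => tt j y) x = x := by decide

theorem rr_maniplex : IsManiplex 4 rr := by
  refine ⟨⟨0⟩, fun i u => tt_invol i u, fun i u => hneq_tt i u, ?_, fun i j h => hcomm_tt i j h⟩
  intro u v
  rw [show (Set.univ : Set (Fin 4)) = (↑(Finset.univ : Finset (Fin 4)) : Set (Fin 4)) from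
    (Finset.coe_univ).symm, orbit_char]
  exact huniv u v

theorem rr_faithful : IsFaithful rr := by
  intro u
  obtain ⟨φ, hφ, hφu⟩ := exists_auto_to u
  ext v
  simp only [Set.mem_iInter, Set.mem_singleton_iff]
  constructor
  · intro hv
    have h4 : ∀ i : Fin 4, cF i (φ v) = cF i 0 := by
      intro i
      have hm := auto_orbit rr hφ (hv i)
      rw [hφu] at hm
      have hm' : φ v ∈ MFace rr i 0 := hm
      rw [face_char] at hm'
      exact hm'
    have h0 := hfaith0 (φ v) h4
    apply φ.injective
    rw [h0, hφu]
  · rintro rfl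
    intro i
    exact mem_orbit_self rr _ _

theorem rr_cip : HasCIP rr := by
  intro k j H hinj hfaces hpairs u v hu hv
  simp only [Set.mem_iInter] at hu hv
  have hmem : ∀ l, v ∈ MFace rr (j l) u := by
    intro l
    obtain ⟨w, hw⟩ := hfaces l
    have hu' := hu l
    have hv' := hv l
    rw [hw] at hu' hv'
    have he : MFace rr (j l) u = MFace rr (j l) w := orbit_eq_of_mem rr hu'
    rw [he]
    exact hv'
  obtain ⟨φ, hφ, hφu⟩ := exists_auto_to u
  set T := Finset.image j Finset.univ with hT
  have hrange : {m : Fin 4 | m ∉ Set.range j} = (↑(Tᶜ) : Set (Fin 4)) := by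
    ext m
    simp [hT, Set.mem_range, Finset.mem_image]
  rw [hrange]
  have hTv : ∀ t ∈ T, cF t (φ v) = cF t 0 := by
    intro t ht
    obtain ⟨l, _, rfl⟩ := Finset.mem_image.mp ht
    have hm := auto_orbit rr hφ (hmem l)
    rw [hφu] at hm
    have hm' : φ v ∈ MFace rr (j l) 0 := hm
    rw [face_char] at hm'
    exact hm'
  have hc := hcip0 T (φ v) hTv
  have hin : φ v ∈ MOrbit rr (↑(Tᶜ)) (φ u) := by
    rw [hφu, orbit_char]
    exact hc
  have := auto_orbit rr (auto_symm rr hφ) hin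
  simpa using this

theorem rr_thin : IsThin rr := by
  intro i Fm Fp hFm hFp hne
  obtain ⟨x0, hx0m, hx0p⟩ := hne
  fin_cases i <;> norm_num at hFm hFp
  · -- i = 0 : Fm rank -1 (univ), Fp rank 1
    rcases hFm with ⟨⟨iw, hiw⟩, -⟩ | ⟨-, hFmEq⟩
    · exfalso; omega
    rcases hFp with ⟨-, u2, hFpEq⟩ | ⟨hno, -⟩
    swap
    · exact absurd ⟨1, by decide⟩ hno
    have hFm' : Fm = {x | c15 x = c15 x0} := by rw [hFmEq]; exact univ_fiber x0
    have hFp' : Fp = {x | cF 1 x = cF 1 x0} :=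
      rank_face_fiber 1 _ (by decide) Fp u2 hFpEq x0 hx0p
    rcases thinCore0 ⟨c15 x0, hlt15 x0⟩ ⟨cF 1 x0, (hltF x0).2.1⟩ with hemp |
      ⟨h1m, h1p, h2m, h2p, hnew, hall⟩
    · exact absurd ⟨rfl, rfl⟩ (hemp x0)
    · exact thin_helper 0 c15 (cF 1) Fm Fp x0 hFm' hFp' _ _ h1m h1p h2m h2p hnew hall
  · -- i = 1
    rcases hFm with ⟨-, u1, hFmEq⟩ | ⟨hno, -⟩
    swap
    · exact absurd ⟨0, by decide⟩ hno
    rcases hFp with ⟨-, u2, hFpEq⟩ | ⟨hno, -⟩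
    swap
    · exact absurd ⟨2, by decide⟩ hno
    have hFm' : Fm = {x | cF 0 x = cF 0 x0} :=
      rank_face_fiber 0 _ (by decide) Fm u1 hFmEq x0 hx0m
    have hFp' : Fp = {x | cF 2 x = cF 2 x0} :=
      rank_face_fiber 2 _ (by decide) Fp u2 hFpEq x0 hx0p
    rcases thinCore1 ⟨cF 0 x0, (hltF x0).1⟩ ⟨cF 2 x0, (hltF x0).2.2.1⟩ with hemp |
      ⟨h1m, h1p, h2m, h2p, hnew, hall⟩
    · exact absurd ⟨rfl, rfl⟩ (hemp x0)
    · exact thin_helper 1 (cF 0) (cF 2) Fm Fp x0 hFm' hFp' _ _ h1m h1p h2m h2p hnew hall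
  · -- i = 2
    rcases hFm with ⟨-, u1, hFmEq⟩ | ⟨hno, -⟩
    swap
    · exact absurd ⟨1, by decide⟩ hno
    rcases hFp with ⟨-, u2, hFpEq⟩ | ⟨hno, -⟩
    swap
    · exact absurd ⟨3, by decide⟩ hno
    have hFm' : Fm = {x | cF 1 x = cF 1 x0} :=
      rank_face_fiber 1 _ (by decide) Fm u1 hFmEq x0 hx0m
    have hFp' : Fp = {x | cF 3 x = cF 3 x0} :=
      rank_face_fiber 3 _ (by decide) Fp u2 hFpEq x0 hx0p
    rcases thinCore2 ⟨cF 1 x0, (hltF x0).2.1⟩ ⟨cF 3 x0, (hltF x0).2.2.2⟩ with hemp |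
      ⟨h1m, h1p, h2m, h2p, hnew, hall⟩
    · exact absurd ⟨rfl, rfl⟩ (hemp x0)
    · exact thin_helper 2 (cF 1) (cF 3) Fm Fp x0 hFm' hFp' _ _ h1m h1p h2m h2p hnew hall
  · -- i = 3 : Fp rank 4 (univ)
    rcases hFm with ⟨-, u1, hFmEq⟩ | ⟨hno, -⟩
    swap
    · exact absurd ⟨2, by decide⟩ hno
    rcases hFp with ⟨⟨iw, hiw⟩, -⟩ | ⟨-, hFpEq⟩
    · exfalso
      have h4 := iw.is_lt
      omega
    have hFm' : Fm = {x | cF 2 x = cF 2 x0} :=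
      rank_face_fiber 2 _ (by decide) Fm u1 hFmEq x0 hx0m
    have hFp' : Fp = {x | c15 x = c15 x0} := by rw [hFpEq]; exact univ_fiber x0
    rcases thinCore3 ⟨cF 2 x0, (hltF x0).2.2.1⟩ ⟨c15 x0, hlt15 x0⟩ with hemp |
      ⟨h1m, h1p, h2m, h2p, hnew, hall⟩
    · exact absurd ⟨rfl, rfl⟩ (hemp x0)
    · exact thin_helper 3 (cF 2) c15 Fm Fp x0 hFm' hFp' _ _ h1m h1p h2m h2p hnew hall

/-- There is a regular, faithful, thin, polytopal `4`-maniplex with `96` flags,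
`4` vertices, `6` edges, `6` faces and `4` facets, whose `0`- and `3`-faces are
non-bipartite: the flag graph of the `4`-polytope `{{4,3}_3, {3,4}_3}`. -/
theorem stmt13 :
    ∃ (F : Type) (_ : Fintype F) (r : Fin 4 → Equiv.Perm F),
      IsManiplex 4 r ∧ Nat.card F = 96 ∧ IsRegularManiplex r ∧ IsFaithful r ∧
      IsThin r ∧ HasCIP r ∧
      NumFaces r 0 = 4 ∧ NumFaces r 1 = 6 ∧ NumFaces r 2 = 6 ∧ NumFaces r 3 = 4 ∧
      ∀ i : Fin 4, ((i : ℕ) = 0 ∨ (i : ℕ) = 3) →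
        ∀ u : F, ¬ FaceBipartite r {i}ᶜ (MFace r i u) := by
  refine ⟨F96, inferInstance, rr, rr_maniplex, by simp [Nat.card_eq_fintype_card],
    rr_regular, rr_faithful, rr_thin, rr_cip,
    numfaces_eq 0 4 (fun x => (hltF x).1) faceRep0 hrep0,
    numfaces_eq 1 6 (fun x => (hltF x).2.1) faceRep1 hrep1,
    numfaces_eq 2 6 (fun x => (hltF x).2.2.1) faceRep2 hrep2,
    numfaces_eq 3 4 (fun x => (hltF x).2.2.2) faceRep3 hrep3, ?_⟩
  intro i hi u
  fin_cases i
  · exact not_bip rr _ ([1,2,3,1,2,3,1,2,3] : List (Fin 4))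
      (by intro j hj; simp only [Set.mem_compl_iff, Set.mem_singleton_iff]; fin_cases hj <;> decide)
      (by decide) u (oddw0 u)
  · exact absurd hi (by decide)
  · exact absurd hi (by decide)
  · exact not_bip rr _ ([0,1,2,0,1,2,0,1,2] : List (Fin 4))
      (by intro j hj; simp only [Set.mem_compl_iff, Set.mem_singleton_iff]; fin_cases hj <;> decide)
      (by decide) u (oddw3 u)
end

section
/- Let M = (F, r) be a maniplex of rank n. Then the raviolo R(M), with flag set F × ZMod 2 and permutations r̄_i(u, a) = (r_i u, a) for i < n and r̄_n(u, a) = (u, a + 1), is a maniplex of rank n + 1, and R(M) has exactly two n-faces. -/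
/-!
The first `n` generators of the raviolo act on the first coordinate and the last one flips the
second; hence they commute, and the last generator composed with any other moves every flag.
The `n`-faces are the orbits of the first `n` generators: these preserve the second coordinate
and act transitively on `F`, so the `n`-faces are exactly the two layers `F × {0}` and `F × {1}`.
-/

lemma ZMod.add_one_add_one (a : ZMod 2) : a + 1 + 1 = a := by
  revert a; decide

lemma ZMod.eq_or_eq_add_one (a b : ZMod 2) : b = a ∨ b = a + 1 := by
  revert a b; decide

namespace MOrbit

variable {n : ℕ} {F : Type*} {r : Fin n → Equiv.Perm F} {J : Set (Fin n)} {u v : F}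

lemma mono {J' : Set (Fin n)} (hJ : J ⊆ J') (hv : v ∈ MOrbit r J u) : v ∈ MOrbit r J' u := by
  obtain ⟨g, hg, rfl⟩ := hv
  exact ⟨g, Subgroup.closure_mono (Set.image_mono hJ) hg, rfl⟩

lemma apply_mem {j : Fin n} (hj : j ∈ J) (hv : v ∈ MOrbit r J u) : r j v ∈ MOrbit r J u := by
  obtain ⟨g, hg, rfl⟩ := hv
  exact ⟨r j * g, mul_mem (Subgroup.subset_closure ⟨j, hj, rfl⟩) hg, rfl⟩

lemma eq_of_invariant {β : Type*} (f : F → β) (hf : ∀ j ∈ J, ∀ x, f (r j x) = f x)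
    (hv : v ∈ MOrbit r J u) : f v = f u := by
  obtain ⟨g, hg, rfl⟩ := hv
  induction hg using Subgroup.closure_induction generalizing u with
  | mem _ h => obtain ⟨j, hj, rfl⟩ := h; exact hf j hj u
  | one => rfl
  | mul g h _ _ hg hh => exact (hg (u := h u)).trans hh
  | inv g _ hg => simpa using (hg (u := g⁻¹ u)).symm

end MOrbit

def Equiv.Perm.prodCongrLeftHom (α β : Type*) : Equiv.Perm α →* Equiv.Perm (α × β) where
  toFun g := Equiv.prodCongr g (Equiv.refl β)
  map_one' := rfl
  map_mul' _ _ := rfl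

namespace raviolo

variable {n : ℕ} {F : Type*} (r : Fin n → Equiv.Perm F)

lemma castSucc_eq (i : Fin n) :
    raviolo r i.castSucc = Equiv.Perm.prodCongrLeftHom F (ZMod 2) (r i) := by
  simp [raviolo]; rfl

@[simp] lemma castSucc_apply (i : Fin n) (p : F × ZMod 2) :
    raviolo r i.castSucc p = (r i p.1, p.2) := by
  simp [raviolo]; rfl

@[simp] lemma last_apply (p : F × ZMod 2) : raviolo r (Fin.last n) p = (p.1, p.2 + 1) := by
  simp [raviolo]; rfl

variable {r}

lemma mk_mem_mOrbit {J : Set (Fin n)} {u v : F} (hv : v ∈ MOrbit r J u) (a : ZMod 2) :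
    (v, a) ∈ MOrbit (raviolo r) (Fin.castSucc '' J) (u, a) := by
  obtain ⟨g, hg, rfl⟩ := hv
  have hmap := Subgroup.mem_map_of_mem (Equiv.Perm.prodCongrLeftHom F (ZMod 2)) hg
  rw [MonoidHom.map_closure, ← Set.image_comp] at hmap
  refine ⟨Equiv.Perm.prodCongrLeftHom F (ZMod 2) g, ?_, rfl⟩
  rwa [← Set.image_comp, show raviolo r ∘ Fin.castSucc = _ ∘ r from funext (castSucc_eq r)]

end raviolo

section

variable {n : ℕ} {F : Type*} {r : Fin n → Equiv.Perm F}

lemma raviolo_nonadjacent_axiom (hM : IsManiplex n r) (i j : Fin (n + 1))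
    (hij : 1 < |(i : ℤ) - (j : ℤ)|) :
    (∀ p, raviolo r i (raviolo r j (raviolo r i (raviolo r j p))) = p) ∧
      ∀ p, raviolo r i (raviolo r j p) ≠ p := by
  obtain ⟨-, hinv, -, -, hcomm⟩ := hM
  induction i using Fin.lastCases with
  | last =>
    induction j using Fin.lastCases with
    | last => simp at hij
    | cast j =>
      refine ⟨fun p => by simp [hinv, ZMod.add_one_add_one],
        fun p h => by simpa using congrArg Prod.snd h⟩
  | cast i =>
    induction j using Fin.lastCases with
    | last =>
      refine ⟨fun p => by simp [hinv, ZMod.add_one_add_one],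
        fun p h => by simpa using congrArg Prod.snd h⟩
    | cast j =>
      obtain ⟨hrel, hfree⟩ := hcomm i j (by simpa using hij)
      exact ⟨fun p => by simp [hrel], fun p h => hfree p.1 (by simpa using congrArg Prod.fst h)⟩

theorem isManiplex_raviolo (hM : IsManiplex n r) : IsManiplex (n + 1) (raviolo r) := by
  have hcomm := raviolo_nonadjacent_axiom hM
  obtain ⟨⟨u₀⟩, hinv, hfree, htrans, -⟩ := hM
  refine ⟨⟨(u₀, 0)⟩, fun i p => ?_, fun i p => ?_, fun p q => ?_, hcomm⟩
  · induction i using Fin.lastCases <;> simp [hinv, ZMod.add_one_add_one]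
  · induction i using Fin.lastCases with
    | last => exact fun h => by simpa using congrArg Prod.snd h
    | cast i => exact fun h => hfree i p.1 (by simpa using congrArg Prod.fst h)
  · have hlift : (q.1, p.2) ∈ MOrbit (raviolo r) Set.univ p :=
      MOrbit.mono (Set.subset_univ _) (raviolo.mk_mem_mOrbit (htrans p.1 q.1) p.2)
    obtain h | h := ZMod.eq_or_eq_add_one p.2 q.2
    · rwa [← h] at hlift
    · simpa [← h] using MOrbit.apply_mem (Set.mem_univ (Fin.last n)) hlift

theorem mFace_raviolo_last (hM : IsManiplex n r) (p : F × ZMod 2) :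
    MFace (raviolo r) (Fin.last n) p = {q | q.2 = p.2} := by
  ext ⟨v, b⟩
  refine ⟨fun hq => MOrbit.eq_of_invariant Prod.snd (fun j hj x => ?_) hq,
    fun (hb : b = p.2) => ?_⟩
  · obtain ⟨i, rfl⟩ := Fin.exists_castSucc_eq.2 hj
    simp
  · subst hb
    refine MOrbit.mono ?_ (raviolo.mk_mem_mOrbit (hM.2.2.2.1 p.1 v) p.2)
    rintro _ ⟨i, -, rfl⟩
    exact Fin.castSucc_ne_last i

theorem ncard_mFace_raviolo_last (hM : IsManiplex n r) :
    {O | ∃ p : F × ZMod 2, O = MFace (raviolo r) (Fin.last n) p}.ncard = 2 := by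
  obtain ⟨u₀⟩ := hM.1
  have hfaces : {O | ∃ p : F × ZMod 2, O = MFace (raviolo r) (Fin.last n) p} =
      Set.range fun a : ZMod 2 => {q : F × ZMod 2 | q.2 = a} := by
    ext O
    simp only [mFace_raviolo_last hM, Set.mem_ofPred_eq, Set.mem_range, Prod.exists]
    exact ⟨fun ⟨_, a, h⟩ => ⟨a, h.symm⟩, fun ⟨a, h⟩ => ⟨u₀, a, h.symm⟩⟩
  have hinj : Function.Injective fun a : ZMod 2 => {q : F × ZMod 2 | q.2 = a} := fun a b h => by
    simpa using Set.ext_iff.1 h (u₀, a)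
  rw [hfaces, Set.ncard_range_of_injective hinj, Nat.card_zmod]

end

theorem stmt15_general {n : ℕ} {F : Type*} (r : Fin n → Equiv.Perm F)
    (hM : IsManiplex n r) :
    IsManiplex (n + 1) (raviolo r) ∧
      {O : Set (F × ZMod 2) | ∃ p : F × ZMod 2, O = MFace (raviolo r) (Fin.last n) p}.ncard
        = 2 :=
  ⟨isManiplex_raviolo hM, ncard_mFace_raviolo_last hM⟩

/-- The raviolo of a maniplex of rank `n` is a maniplex of rank `n+1` having exactly
two `n`-faces. -/
theorem stmt15 {n : ℕ} {F : Type*} [Fintype F] (r : Fin n → Equiv.Perm F)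
    (hM : IsManiplex n r) :
    IsManiplex (n + 1) (raviolo r) ∧
      {O : Set (F × ZMod 2) | ∃ p : F × ZMod 2, O = MFace (raviolo r) (Fin.last n) p}.ncard
        = 2 :=
  stmt15_general r hM
end
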